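/- arXiv:2601.07759 — 4 statements merged into one kernel-verified Lean document; each statement's English description precedes it below -/
import Mathlib

section
/- For all integers n, m ≥ 1 and every matrix M ∈ ℝ^{n×m}, the game value satisfies v(−Mᵀ) = −v(M); that is, min_{x ∈ Δ_m} max_{y ∈ Δ_n} xᵀ(−Mᵀ)y = − min_{x ∈ Δ_n} max_{y ∈ Δ_m} xᵀMy. -/
open MeasureTheory ProbabilityTheory Matrix

/-- The value of the zero-sum game associated to a matrix `M ∈ ℝ^{n×m}`:
`v(M) = min_{x ∈ Δ_n} max_{y ∈ Δ_m} xᵀ M y`. -/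
noncomputable def gameValue {n m : ℕ} (M : Matrix (Fin n) (Fin m) ℝ) : ℝ :=
  ⨅ x : stdSimplex ℝ (Fin n), ⨆ y : stdSimplex ℝ (Fin m),
    (x : Fin n → ℝ) ⬝ᵥ M.mulVec (y : Fin m → ℝ)

lemma farkas_alt {n m : ℕ} (hn : 0 < n) (A : Matrix (Fin n) (Fin m) ℝ) :
    (∃ y ∈ stdSimplex ℝ (Fin m), ∀ i, A.mulVec y i ≤ 0) ∨
    (∃ x ∈ stdSimplex ℝ (Fin n), ∀ j, 0 < ∑ i, x i * A i j) := by
  classical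
  set glin : (Fin m ⊕ Fin n → ℝ) →ₗ[ℝ] (Fin n → ℝ) :=
    { toFun := fun w => A.mulVec (w ∘ Sum.inl) + (w ∘ Sum.inr)
      map_add' := by
        intro w w'
        have h1 : (w + w') ∘ Sum.inl = w ∘ Sum.inl + w' ∘ Sum.inl := rfl
        have h2 : (w + w') ∘ Sum.inr = w ∘ Sum.inr + w' ∘ Sum.inr := rfl
        simp only [h1, h2, Matrix.mulVec_add]
        abel
      map_smul' := by
        intro c w
        have h1 : (c • w) ∘ Sum.inl = c • (w ∘ Sum.inl) := rfl
        have h2 : (c • w) ∘ Sum.inr = c • (w ∘ Sum.inr) := rfl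
        simp only [h1, h2, Matrix.mulVec_smul, RingHom.id_apply, smul_add] } with hglin
  set K : Set (Fin n → ℝ) := glin '' stdSimplex ℝ (Fin m ⊕ Fin n) with hK
  have hKconv : Convex ℝ K := (convex_stdSimplex ℝ _).linear_image glin
  have hKcomp : IsCompact K :=
    (isCompact_stdSimplex ℝ _).image glin.continuous_of_finiteDimensional
  by_cases h0 : (0 : Fin n → ℝ) ∈ K
  · left
    obtain ⟨w, hw, hgw⟩ := h0
    set y0 : Fin m → ℝ := w ∘ Sum.inl with hy0
    set z : Fin n → ℝ := w ∘ Sum.inr with hz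
    have hAy : ∀ i, A.mulVec y0 i = -z i := by
      intro i
      have h2 : (A.mulVec (w ∘ Sum.inl) + (w ∘ Sum.inr)) i = 0 := congrFun hgw i
      simp only [Pi.add_apply] at h2
      simp only [hy0, hz]
      linarith [h2]
    have hynn : ∀ j, 0 ≤ y0 j := fun j => hw.1 _
    have hznn : ∀ i, 0 ≤ z i := fun i => hw.1 _
    have hsum : ∑ j, y0 j + ∑ i, z i = 1 := by
      have := hw.2
      rwa [Fintype.sum_sum_type] at this
    set s := ∑ j, y0 j with hs
    have hspos : 0 < s := by
      rcases (Finset.sum_nonneg fun j _ => hynn j).lt_or_eq with h | h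
      · exact h
      · exfalso
        have hy00 : y0 = 0 := by
          funext j
          exact le_antisymm (by
            have := Finset.sum_eq_zero_iff_of_nonneg (fun j _ => hynn j) |>.mp h.symm
            exact le_of_eq (this j (Finset.mem_univ j))) (hynn j)
        have hz0 : ∀ i, z i = 0 := by
          intro i
          have := hAy i
          rw [hy00, Matrix.mulVec_zero] at this
          simpa using this.symm
        rw [hs, hy00] at hsum
        simp [hz0] at hsum
    refine ⟨s⁻¹ • y0, ⟨fun j => mul_nonneg (inv_nonneg.mpr hspos.le) (hynn j), ?_⟩, ?_⟩
    · simp only [Pi.smul_apply, smul_eq_mul, ← Finset.mul_sum]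
      field_simp
      exact hs.symm
    · intro i
      rw [Matrix.mulVec_smul]
      have := hAy i
      simp only [Pi.smul_apply, smul_eq_mul, this]
      have : -z i ≤ 0 := neg_nonpos.mpr (hznn i)
      nlinarith [inv_nonneg.mpr hspos.le, hznn i]
  · right
    obtain ⟨f, u, hfu, hsep⟩ := geometric_hahn_banach_point_closed hKconv hKcomp.isClosed h0
    have hu : 0 < u := by simpa using hfu
    have hei : ∀ i : Fin n, (Pi.single i 1 : Fin n → ℝ) ∈ K := by
      intro i
      refine ⟨Pi.single (Sum.inr i) 1, single_mem_stdSimplex ℝ _, ?_⟩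
      have h1 : (Pi.single (Sum.inr i) 1 : Fin m ⊕ Fin n → ℝ) ∘ Sum.inl = 0 := by
        funext j; simp [Pi.single_apply]
      have h2 : (Pi.single (Sum.inr i) 1 : Fin m ⊕ Fin n → ℝ) ∘ Sum.inr = Pi.single i 1 := by
        funext k; simp [Pi.single_apply]
      simp only [hglin, LinearMap.coe_mk, AddHom.coe_mk, h1, h2, Matrix.mulVec_zero, zero_add]
    have hcol : ∀ j : Fin m, (fun i => A i j) ∈ K := by
      intro j
      refine ⟨Pi.single (Sum.inl j) 1, single_mem_stdSimplex ℝ _, ?_⟩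
      have h1 : (Pi.single (Sum.inl j) 1 : Fin m ⊕ Fin n → ℝ) ∘ Sum.inl = Pi.single j 1 := by
        funext k; simp [Pi.single_apply]
      have h2 : (Pi.single (Sum.inl j) 1 : Fin m ⊕ Fin n → ℝ) ∘ Sum.inr = 0 := by
        funext k; simp [Pi.single_apply]
      simp only [hglin, LinearMap.coe_mk, AddHom.coe_mk, h1, h2, Matrix.mulVec_single, add_zero,
        mul_one]
      funext i; simp
    set x0 : Fin n → ℝ := fun i => f (Pi.single i 1) with hx0
    have hx0pos : ∀ i, 0 < x0 i := fun i => hu.trans (hsep _ (hei i))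
    have happ : ∀ v : Fin n → ℝ, f v = ∑ i, v i * x0 i := by
      intro v
      have := (f : (Fin n → ℝ) →ₗ[ℝ] ℝ).pi_apply_eq_sum_univ v
      simp only [ContinuousLinearMap.coe_coe, smul_eq_mul] at this
      rw [this]
      refine Finset.sum_congr rfl fun i _ => ?_
      congr 2
      funext j
      simp [Pi.single_apply, eq_comm]
    have hfcol : ∀ j, 0 < ∑ i, A i j * x0 i := by
      intro j
      have h1 := hu.trans (hsep _ (hcol j))
      rwa [happ] at h1
    set S := ∑ i, x0 i with hS
    have hSpos : 0 < S := Finset.sum_pos (fun i _ => hx0pos i) ⟨⟨0, hn⟩, Finset.mem_univ _⟩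
    refine ⟨S⁻¹ • x0, ⟨fun i => mul_nonneg (inv_nonneg.mpr hSpos.le) (hx0pos i).le, ?_⟩, ?_⟩
    · simp only [Pi.smul_apply, smul_eq_mul, ← Finset.mul_sum]
      field_simp
      exact hS.symm
    · intro j
      simp only [Pi.smul_apply, smul_eq_mul, mul_assoc, ← Finset.mul_sum]
      have : ∑ i, x0 i * A i j = ∑ i, A i j * x0 i := by
        exact Finset.sum_congr rfl fun i _ => mul_comm _ _
      rw [this]
      exact mul_pos (inv_pos.mpr hSpos) (hfcol j)

section gameAux
variable {n m : ℕ}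

lemma cont_right (M : Matrix (Fin n) (Fin m) ℝ) (x : Fin n → ℝ) :
    Continuous fun y : Fin m → ℝ => x ⬝ᵥ M.mulVec y := by
  simp only [dotProduct, mulVec]
  exact continuous_finset_sum _ fun i _ =>
    continuous_const.mul (continuous_finset_sum _ fun j _ =>
      continuous_const.mul (continuous_apply j))

lemma cont_left (M : Matrix (Fin n) (Fin m) ℝ) (y : Fin m → ℝ) :
    Continuous fun x : Fin n → ℝ => x ⬝ᵥ M.mulVec y := by
  simp only [dotProduct, mulVec]
  exact continuous_finset_sum _ fun i _ => (continuous_apply i).mul continuous_const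

lemma game_minimax (hn : 0 < n) (hm : 0 < m) (M : Matrix (Fin n) (Fin m) ℝ) :
    gameValue M = ⨆ y : stdSimplex ℝ (Fin m), ⨅ x : stdSimplex ℝ (Fin n),
      (x : Fin n → ℝ) ⬝ᵥ M.mulVec (y : Fin m → ℝ) := by
  haveI hNn : Nonempty (stdSimplex ℝ (Fin n)) :=
    ⟨⟨Pi.single ⟨0, hn⟩ 1, single_mem_stdSimplex ℝ _⟩⟩
  haveI hNm : Nonempty (stdSimplex ℝ (Fin m)) :=
    ⟨⟨Pi.single ⟨0, hm⟩ 1, single_mem_stdSimplex ℝ _⟩⟩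
  have bddA : ∀ x : stdSimplex ℝ (Fin n),
      BddAbove (Set.range fun y : stdSimplex ℝ (Fin m) =>
        (x : Fin n → ℝ) ⬝ᵥ M.mulVec (y : Fin m → ℝ)) := fun x =>
    (isCompact_range ((cont_right M x).comp continuous_subtype_val)).bddAbove
  have bddB : ∀ y : stdSimplex ℝ (Fin m),
      BddBelow (Set.range fun x : stdSimplex ℝ (Fin n) =>
        (x : Fin n → ℝ) ⬝ᵥ M.mulVec (y : Fin m → ℝ)) := fun y =>
    (isCompact_range ((cont_left M y).comp continuous_subtype_val)).bddBelow
  have bddInfFam : BddAbove (Set.range fun y : stdSimplex ℝ (Fin m) =>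
      ⨅ x : stdSimplex ℝ (Fin n), (x : Fin n → ℝ) ⬝ᵥ M.mulVec (y : Fin m → ℝ)) := by
    obtain ⟨x₀⟩ := hNn
    obtain ⟨b, hb⟩ := bddA x₀
    refine ⟨b, ?_⟩
    rintro _ ⟨y, rfl⟩
    exact (ciInf_le (bddB y) x₀).trans (hb (Set.mem_range_self y))
  have bddSupFam : BddBelow (Set.range fun x : stdSimplex ℝ (Fin n) =>
      ⨆ y : stdSimplex ℝ (Fin m), (x : Fin n → ℝ) ⬝ᵥ M.mulVec (y : Fin m → ℝ)) := by
    obtain ⟨y₀⟩ := hNm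
    obtain ⟨b, hb⟩ := bddB y₀
    refine ⟨b, ?_⟩
    rintro _ ⟨x, rfl⟩
    exact le_trans (hb (Set.mem_range_self x)) (le_ciSup (bddA x) y₀)
  apply le_antisymm
  · -- strong duality
    have key : ∀ c : ℝ,
        (⨆ y : stdSimplex ℝ (Fin m), ⨅ x : stdSimplex ℝ (Fin n),
          (x : Fin n → ℝ) ⬝ᵥ M.mulVec (y : Fin m → ℝ)) < c → gameValue M ≤ c := by
      intro c hc
      rcases farkas_alt hn (Matrix.of fun i j => c - M i j) with ⟨y, hy, hle⟩ | ⟨x, hx, hlt⟩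
      · exfalso
        have h1 : ∀ i, c ≤ M.mulVec y i := by
          intro i
          have h2 := hle i
          have h3 : (Matrix.of fun i j => c - M i j).mulVec y i = c - M.mulVec y i := by
            simp only [Matrix.mulVec, dotProduct, Matrix.of_apply, sub_mul]
            rw [Finset.sum_sub_distrib]
            congr 1
            rw [← Finset.mul_sum, hy.2, mul_one]
          rw [h3] at h2
          linarith
        have h2 : ∀ x' : stdSimplex ℝ (Fin n),
            c ≤ (x' : Fin n → ℝ) ⬝ᵥ M.mulVec y := by
          intro x'
          have hc1 : c = ∑ i, (x' : Fin n → ℝ) i * c := by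
            rw [← Finset.sum_mul, show ∑ i, (x' : Fin n → ℝ) i = 1 from x'.2.2, one_mul]
          rw [hc1]
          exact Finset.sum_le_sum fun i _ =>
            mul_le_mul_of_nonneg_left (h1 i) (x'.2.1 i)
        have h3 : c ≤ ⨅ x' : stdSimplex ℝ (Fin n),
            (x' : Fin n → ℝ) ⬝ᵥ M.mulVec ((⟨y, hy⟩ : stdSimplex ℝ (Fin m)) : Fin m → ℝ) :=
          le_ciInf h2
        have h4 := le_ciSup bddInfFam (⟨y, hy⟩ : stdSimplex ℝ (Fin m))
        linarith
      · have h1 : ∀ j, ∑ i, x i * M i j ≤ c := by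
          intro j
          have h2 := hlt j
          have h3 : ∑ i, x i * (Matrix.of fun i j => c - M i j) i j
              = c - ∑ i, x i * M i j := by
            simp only [Matrix.of_apply, mul_sub]
            rw [Finset.sum_sub_distrib]
            congr 1
            rw [← Finset.sum_mul, hx.2, one_mul]
          rw [h3] at h2
          linarith
        have h2 : ∀ y' : stdSimplex ℝ (Fin m),
            ((⟨x, hx⟩ : stdSimplex ℝ (Fin n)) : Fin n → ℝ) ⬝ᵥ M.mulVec (y' : Fin m → ℝ) ≤ c := by
          intro y'
          have hpay : x ⬝ᵥ M.mulVec (y' : Fin m → ℝ)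
              = ∑ j, (∑ i, x i * M i j) * (y' : Fin m → ℝ) j := by
            simp only [dotProduct, mulVec, Finset.mul_sum, Finset.sum_mul]
            rw [Finset.sum_comm]
            exact Finset.sum_congr rfl fun j _ => Finset.sum_congr rfl fun i _ => by ring
          have hc1 : c = ∑ j, c * (y' : Fin m → ℝ) j := by
            rw [← Finset.mul_sum, show ∑ j, (y' : Fin m → ℝ) j = 1 from y'.2.2, mul_one]
          show x ⬝ᵥ M.mulVec (y' : Fin m → ℝ) ≤ c
          rw [hpay, hc1]
          exact Finset.sum_le_sum fun j _ =>
            mul_le_mul_of_nonneg_right (h1 j) (y'.2.1 j)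
        exact le_trans (ciInf_le bddSupFam (⟨x, hx⟩ : stdSimplex ℝ (Fin n))) (ciSup_le h2)
    by_contra hlt
    push_neg at hlt
    obtain ⟨c, hc1, hc2⟩ := exists_between hlt
    exact absurd (key c hc1) (not_le.mpr hc2)
  · -- weak duality
    refine le_ciInf fun x => ?_
    exact ciSup_mono (bddA x) fun y => ciInf_le (bddB y) x

end gameAux
lemma real_iInf_neg' {ι : Sort*} (f : ι → ℝ) : ⨅ i, -f i = -⨆ i, f i := by
  rw [iInf, iSup, Real.sInf_def]
  congr 2
  ext x
  simp [Set.mem_neg, neg_eq_iff_eq_neg, eq_comm]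

lemma real_iSup_neg' {ι : Sort*} (f : ι → ℝ) : ⨆ i, -f i = -⨅ i, f i := by
  have h := real_iInf_neg' (fun i => -f i)
  simp only [neg_neg] at h
  linarith [h]

/-- For every matrix `M ∈ ℝ^{n×m}`, the game value satisfies `v(−Mᵀ) = −v(M)`. -/
theorem gameValue_neg_transpose (n m : ℕ) (hn : 1 ≤ n) (hm : 1 ≤ m)
    (M : Matrix (Fin n) (Fin m) ℝ) :
    gameValue (-(M.transpose)) = - gameValue M := by
  have hpt : ∀ (p : stdSimplex ℝ (Fin m)) (q : stdSimplex ℝ (Fin n)),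
      (p : Fin m → ℝ) ⬝ᵥ (-(M.transpose)).mulVec (q : Fin n → ℝ)
        = -((q : Fin n → ℝ) ⬝ᵥ M.mulVec (p : Fin m → ℝ)) := by
    intro p q
    rw [Matrix.neg_mulVec, dotProduct_neg, Matrix.mulVec_transpose, dotProduct_comm,
      ← Matrix.dotProduct_mulVec]
  have step1 : ∀ p : stdSimplex ℝ (Fin m),
      (⨆ q : stdSimplex ℝ (Fin n), (p : Fin m → ℝ) ⬝ᵥ (-(M.transpose)).mulVec (q : Fin n → ℝ))
        = -(⨅ q : stdSimplex ℝ (Fin n), (q : Fin n → ℝ) ⬝ᵥ M.mulVec (p : Fin m → ℝ)) := by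
    intro p
    rw [show (fun q : stdSimplex ℝ (Fin n) =>
        (p : Fin m → ℝ) ⬝ᵥ (-(M.transpose)).mulVec (q : Fin n → ℝ))
      = fun q : stdSimplex ℝ (Fin n) =>
        -((q : Fin n → ℝ) ⬝ᵥ M.mulVec (p : Fin m → ℝ)) from funext fun q => hpt p q]
    exact real_iSup_neg' _
  show (⨅ p : stdSimplex ℝ (Fin m), ⨆ q : stdSimplex ℝ (Fin n),
      (p : Fin m → ℝ) ⬝ᵥ (-(M.transpose)).mulVec (q : Fin n → ℝ)) = - gameValue M
  rw [iInf_congr step1, real_iInf_neg', game_minimax hn hm M]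
end

section
/- Let n, m ≥ 1 and let M ∈ ℝ^{n×m} be a standard Gaussian random matrix. Then for every t ≥ 0, P(v(M) ≥ t) ≤ m · exp(−n t²/2). -/
open MeasureTheory ProbabilityTheory Matrix

/-- `M` is a standard Gaussian random matrix on the probability space `(Ω, P)`:
its entries are independent standard Gaussian `N(0,1)` random variables. -/
def IsStdGaussianMatrix {Ω : Type*} [MeasurableSpace Ω] (P : Measure Ω) {n m : ℕ}
    (M : Ω → Matrix (Fin n) (Fin m) ℝ) : Prop :=
  (∀ i j, Measurable (fun ω => M ω i j)) ∧
  iIndepFun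
    (fun p : Fin n × Fin m => fun ω => M ω p.1 p.2) P ∧
  ∀ i j, Measure.map (fun ω => M ω i j) P = gaussianReal 0 1

open Real
open scoped NNReal ENNReal

section Aux

/-- Completing the square for the standard Gaussian density. -/
lemma aux_pdf_mul_exp (s x : ℝ) :
    gaussianPDFReal 0 1 x * rexp (s * x) = rexp (s ^ 2 / 2) * gaussianPDFReal s 1 x := by
  unfold gaussianPDFReal
  have h : (-(x - 0) ^ 2 / (2 * ((1 : ℝ≥0) : ℝ))) + s * x
      = s ^ 2 / 2 + (-(x - s) ^ 2 / (2 * ((1 : ℝ≥0) : ℝ))) := by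
    push_cast; ring
  calc (√(2 * π * ((1 : ℝ≥0) : ℝ)))⁻¹ * rexp (-(x - 0) ^ 2 / (2 * ((1 : ℝ≥0) : ℝ))) *
        rexp (s * x)
      = (√(2 * π * ((1 : ℝ≥0) : ℝ)))⁻¹ *
          rexp ((-(x - 0) ^ 2 / (2 * ((1 : ℝ≥0) : ℝ))) + s * x) := by
        rw [mul_assoc, Real.exp_add]
    _ = rexp (s ^ 2 / 2) *
          ((√(2 * π * ((1 : ℝ≥0) : ℝ)))⁻¹ * rexp (-(x - s) ^ 2 / (2 * ((1 : ℝ≥0) : ℝ)))) := by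
        rw [h, Real.exp_add]; ring

lemma aux_gaussianReal_eq :
    gaussianReal 0 1 = MeasureTheory.volume.withDensity
      (fun x => ((gaussianPDFReal 0 1 x).toNNReal : ENNReal)) := by
  rw [gaussianReal_of_var_ne_zero 0 one_ne_zero]; rfl

lemma aux_pdf_meas : Measurable (fun x => (gaussianPDFReal 0 1 x).toNNReal) :=
  (measurable_gaussianPDFReal 0 1).real_toNNReal

lemma aux_integral_exp_gaussian (s : ℝ) :
    ∫ x, rexp (s * x) ∂(gaussianReal 0 1) = rexp (s ^ 2 / 2) := by
  rw [aux_gaussianReal_eq, integral_withDensity_eq_integral_smul aux_pdf_meas]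
  simp_rw [NNReal.smul_def, Real.coe_toNNReal _ (gaussianPDFReal_nonneg 0 1 _), smul_eq_mul, aux_pdf_mul_exp]
  rw [integral_const_mul, integral_gaussianPDFReal_eq_one s one_ne_zero, mul_one]

lemma aux_integrable_exp_gaussian (s : ℝ) :
    Integrable (fun x => rexp (s * x)) (gaussianReal 0 1) := by
  rw [aux_gaussianReal_eq, integrable_withDensity_iff_integrable_smul aux_pdf_meas]
  simp_rw [NNReal.smul_def, Real.coe_toNNReal _ (gaussianPDFReal_nonneg 0 1 _), smul_eq_mul, aux_pdf_mul_exp]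
  exact (integrable_gaussianPDFReal s 1).const_mul _

variable {Ω : Type*} [MeasurableSpace Ω] {P : Measure Ω}

lemma aux_mgf_gauss {X : Ω → ℝ} (hX : Measurable X)
    (hmap : Measure.map X P = gaussianReal 0 1) (s : ℝ) :
    mgf X P s = rexp (s ^ 2 / 2) := by
  have hsm : AEStronglyMeasurable (fun x : ℝ => rexp (s * x)) (Measure.map X P) :=
    ((measurable_id.const_mul s).exp).aestronglyMeasurable
  calc mgf X P s = ∫ x, rexp (s * x) ∂(Measure.map X P) :=
        (integral_map hX.aemeasurable hsm).symm
    _ = rexp (s ^ 2 / 2) := by rw [hmap, aux_integral_exp_gaussian]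

lemma aux_integrable_exp_mul {X : Ω → ℝ} (hX : Measurable X)
    (hmap : Measure.map X P = gaussianReal 0 1) (s : ℝ) :
    Integrable (fun ω => rexp (s * X ω)) P := by
  have h : Integrable (fun x : ℝ => rexp (s * x)) (Measure.map X P) := by
    rw [hmap]; exact aux_integrable_exp_gaussian s
  have hsm : AEStronglyMeasurable (fun x : ℝ => rexp (s * x)) (Measure.map X P) :=
    ((measurable_id.const_mul s).exp).aestronglyMeasurable
  exact (integrable_map_measure hsm hX.aemeasurable).mp h

/-- A subfamily (indexed by an injection) of an independent family is independent. -/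
lemma aux_iIndepFun_comp_inj {ι κ β : Type*} [mβ : MeasurableSpace β] {f : ι → Ω → β}
    (h : iIndepFun f P) {g : κ → ι} (hg : Function.Injective g) :
    iIndepFun (fun k => f (g k)) P := by
  classical
  rw [iIndepFun_iff_measure_inter_preimage_eq_mul] at h ⊢
  intro S sets hsets
  set sets' : ι → Set β := fun i =>
    if hi : ∃ k, g k = i then sets hi.choose else Set.univ with hsets'_def
  have hs' : ∀ k, sets' (g k) = sets k := by
    intro k
    have hk : ∃ k', g k' = g k := ⟨k, rfl⟩
    simp only [hsets'_def, dif_pos hk]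
    exact congrArg sets (hg hk.choose_spec)
  have key := h (S.map ⟨g, hg⟩) (sets := sets') ?_
  · have hint : (⋂ i ∈ S.map ⟨g, hg⟩, f i ⁻¹' sets' i)
        = ⋂ k ∈ S, f (g k) ⁻¹' sets k := by
      ext ω
      simp only [Set.mem_iInter, Finset.mem_map, Function.Embedding.coeFn_mk, Set.mem_preimage]
      constructor
      · intro H k hk
        have := H (g k) ⟨k, hk, rfl⟩
        rwa [hs' k] at this
      · rintro H i ⟨k, hk, rfl⟩
        rw [hs' k]; exact H k hk
    have hprod : (∏ i ∈ S.map ⟨g, hg⟩, P (f i ⁻¹' sets' i))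
        = ∏ k ∈ S, P (f (g k) ⁻¹' sets k) := by
      rw [Finset.prod_map]
      exact Finset.prod_congr rfl fun k _ => by
        simp only [Function.Embedding.coeFn_mk, hs' k]
    rw [hint, hprod] at key
    exact key
  · rintro i hi
    obtain ⟨k, hk, rfl⟩ := Finset.mem_map.mp hi
    simpa only [Function.Embedding.coeFn_mk, hs' k] using hsets k hk

/-- If the game value is at least `t`, some column sum is at least `n·t`
(via the uniform row strategy). -/
lemma aux_exists_col {n m : ℕ} (hn : 1 ≤ n) (hm : 1 ≤ m)
    (M : Matrix (Fin n) (Fin m) ℝ) {t : ℝ} (h : t ≤ gameValue M) :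
    ∃ j, (n : ℝ) * t ≤ ∑ i, M i j := by
  have hn0 : (0 : ℝ) < n := by exact_mod_cast Nat.lt_of_lt_of_le Nat.zero_lt_one hn
  have hm0 : (0 : ℝ) < m := by exact_mod_cast Nat.lt_of_lt_of_le Nat.zero_lt_one hm
  set u : Fin n → ℝ := fun _ => (n : ℝ)⁻¹ with hu_def
  have hu : u ∈ stdSimplex ℝ (Fin n) := by
    refine ⟨fun i => by positivity, ?_⟩
    simp [hu_def, Finset.sum_const, mul_inv_cancel₀ hn0.ne']
  set w : Fin m → ℝ := fun _ => (m : ℝ)⁻¹ with hw_def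
  have hw : w ∈ stdSimplex ℝ (Fin m) := by
    refine ⟨fun j => by positivity, ?_⟩
    simp [hw_def, Finset.sum_const, mul_inv_cancel₀ hm0.ne']
  haveI : Nonempty (stdSimplex ℝ (Fin m)) := ⟨⟨w, hw⟩⟩
  set K : ℝ := ∑ i, ∑ j, |M i j| with hK_def
  have hbound : ∀ x ∈ stdSimplex ℝ (Fin n), ∀ y ∈ stdSimplex ℝ (Fin m),
      |x ⬝ᵥ M.mulVec y| ≤ K := by
    intro x hx y hy
    have hx1 : ∀ i, |x i| ≤ 1 := by
      intro i
      rw [abs_of_nonneg (hx.1 i)]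
      calc x i ≤ ∑ i', x i' := Finset.single_le_sum (fun j _ => hx.1 j) (Finset.mem_univ i)
        _ = 1 := hx.2
    have hy1 : ∀ j, |y j| ≤ 1 := by
      intro j
      rw [abs_of_nonneg (hy.1 j)]
      calc y j ≤ ∑ j', y j' := Finset.single_le_sum (fun j' _ => hy.1 j') (Finset.mem_univ j)
        _ = 1 := hy.2
    calc |x ⬝ᵥ M.mulVec y| ≤ ∑ i, |x i * (M.mulVec y) i| := Finset.abs_sum_le_sum_abs _ _
      _ ≤ ∑ i, ∑ j, |M i j| := by
          refine Finset.sum_le_sum fun i _ => ?_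
          rw [abs_mul]
          calc |x i| * |(M.mulVec y) i| ≤ 1 * |(M.mulVec y) i| := by
                exact mul_le_mul_of_nonneg_right (hx1 i) (abs_nonneg _)
            _ = |∑ j, M i j * y j| := by rw [one_mul]; rfl
            _ ≤ ∑ j, |M i j * y j| := Finset.abs_sum_le_sum_abs _ _
            _ ≤ ∑ j, |M i j| := by
                refine Finset.sum_le_sum fun j _ => ?_
                rw [abs_mul]
                exact mul_le_of_le_one_right (abs_nonneg _) (hy1 j)
  have hbddA : ∀ x : stdSimplex ℝ (Fin n),
      BddAbove (Set.range fun y : stdSimplex ℝ (Fin m) =>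
        (x : Fin n → ℝ) ⬝ᵥ M.mulVec (y : Fin m → ℝ)) := by
    intro x
    refine ⟨K, ?_⟩
    rintro _ ⟨y, rfl⟩
    exact (abs_le.mp (hbound x x.2 y y.2)).2
  have hbddB : BddBelow (Set.range fun x : stdSimplex ℝ (Fin n) =>
      ⨆ y : stdSimplex ℝ (Fin m), (x : Fin n → ℝ) ⬝ᵥ M.mulVec (y : Fin m → ℝ)) := by
    refine ⟨-K, ?_⟩
    rintro _ ⟨x, rfl⟩
    calc -K ≤ (x : Fin n → ℝ) ⬝ᵥ M.mulVec w := (abs_le.mp (hbound x x.2 w hw)).1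
      _ ≤ _ := le_ciSup (hbddA x) (⟨w, hw⟩ : stdSimplex ℝ (Fin m))
  obtain ⟨j₀, -, hj₀⟩ := Finset.exists_max_image (Finset.univ : Finset (Fin m))
    (fun j => ∑ i, M i j) (Finset.univ_nonempty_iff.mpr ⟨⟨0, hm⟩⟩)
  refine ⟨j₀, ?_⟩
  have step1 : gameValue M ≤
      ⨆ y : stdSimplex ℝ (Fin m), u ⬝ᵥ M.mulVec (y : Fin m → ℝ) := by
    unfold gameValue
    exact ciInf_le hbddB ⟨u, hu⟩
  have step2 : (⨆ y : stdSimplex ℝ (Fin m), u ⬝ᵥ M.mulVec (y : Fin m → ℝ))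
      ≤ (n : ℝ)⁻¹ * ∑ i, M i j₀ := by
    refine ciSup_le fun y => ?_
    have expand : u ⬝ᵥ M.mulVec (y : Fin m → ℝ)
        = ∑ j, (y : Fin m → ℝ) j * ((n : ℝ)⁻¹ * ∑ i, M i j) := by
      simp only [dotProduct, Matrix.mulVec, hu_def, Finset.mul_sum, Finset.sum_mul]
      rw [Finset.sum_comm]
      exact Finset.sum_congr rfl fun j _ => Finset.sum_congr rfl fun i _ => by ring
    rw [expand]
    calc ∑ j, (y : Fin m → ℝ) j * ((n : ℝ)⁻¹ * ∑ i, M i j)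
        ≤ ∑ j, (y : Fin m → ℝ) j * ((n : ℝ)⁻¹ * ∑ i, M i j₀) := by
          refine Finset.sum_le_sum fun j _ => ?_
          refine mul_le_mul_of_nonneg_left ?_ (y.2.1 j)
          exact mul_le_mul_of_nonneg_left (hj₀ j (Finset.mem_univ j)) (by positivity)
      _ = (n : ℝ)⁻¹ * ∑ i, M i j₀ := by
          rw [← Finset.sum_mul, show (∑ i, y i) = 1 from y.2.2, one_mul]
  have ht' : t ≤ (n : ℝ)⁻¹ * ∑ i, M i j₀ := h.trans (step1.trans step2)
  calc (n : ℝ) * t ≤ (n : ℝ) * ((n : ℝ)⁻¹ * ∑ i, M i j₀) :=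
        mul_le_mul_of_nonneg_left ht' hn0.le
    _ = ∑ i, M i j₀ := by field_simp

end Aux

/-- For a standard Gaussian random matrix `M ∈ ℝ^{n×m}` and every `t ≥ 0`,
`P(v(M) ≥ t) ≤ m · exp(−n t² / 2)`. -/
theorem gameValue_tail_bound {Ω : Type*} [MeasurableSpace Ω] (P : Measure Ω)
    [IsProbabilityMeasure P] (n m : ℕ) (hn : 1 ≤ n) (hm : 1 ≤ m)
    (M : Ω → Matrix (Fin n) (Fin m) ℝ) (hM : IsStdGaussianMatrix P M)
    (t : ℝ) (ht : 0 ≤ t) :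
    P {ω | t ≤ gameValue (M ω)} ≤ ENNReal.ofReal (m * Real.exp (- n * t ^ 2 / 2)) := by
  obtain ⟨hmeas, hindep, hdist⟩ := hM
  have hsub : {ω | t ≤ gameValue (M ω)} ⊆
      ⋃ j : Fin m, {ω | (n : ℝ) * t ≤ ∑ i, M ω i j} := by
    intro ω hω
    obtain ⟨j, hj⟩ := aux_exists_col hn hm (M ω) hω
    exact Set.mem_iUnion.mpr ⟨j, hj⟩
  refine le_trans (measure_mono hsub) ?_
  refine le_trans (measure_iUnion_fintype_le P _) ?_
  have hcol : ∀ j : Fin m, P {ω | (n : ℝ) * t ≤ ∑ i, M ω i j}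
      ≤ ENNReal.ofReal (rexp (- (n : ℝ) * t ^ 2 / 2)) := by
    intro j
    set X : Fin n → Ω → ℝ := fun i ω => M ω i j with hX_def
    have hXmeas : ∀ i, Measurable (X i) := fun i => hmeas i j
    have hXindep : iIndepFun X P :=
      aux_iIndepFun_comp_inj hindep (g := fun i : Fin n => (i, j))
        (fun a b hab => (Prod.ext_iff.mp hab).1)
    have hXint : ∀ i ∈ (Finset.univ : Finset (Fin n)),
        Integrable (fun ω => rexp (t * X i ω)) P :=
      fun i _ => aux_integrable_exp_mul (hXmeas i) (hdist i j) t
    have hInt : Integrable (fun ω => rexp (t * (∑ i, X i) ω)) P :=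
      hXindep.integrable_exp_mul_sum hXmeas hXint
    have hmgf : mgf (∑ i, X i) P t = rexp (t ^ 2 / 2) ^ n := by
      rw [hXindep.mgf_sum hXmeas]
      simp [aux_mgf_gauss (hXmeas _) (hdist _ j) t]
    have hch := measure_ge_le_exp_mul_mgf (μ := P) (X := ∑ i, X i) ((n : ℝ) * t) ht hInt
    rw [hmgf] at hch
    have hset : {ω | (n : ℝ) * t ≤ ∑ i, M ω i j}
        = {ω | (n : ℝ) * t ≤ (∑ i, X i) ω} := by
      ext ω
      simp [hX_def, Finset.sum_apply]
    rw [hset, ENNReal.le_ofReal_iff_toReal_le (measure_ne_top P _) (by positivity)]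
    refine hch.trans (le_of_eq ?_)
    rw [← Real.exp_nat_mul, ← Real.exp_add]
    congr 1
    ring
  calc ∑ j : Fin m, P {ω | (n : ℝ) * t ≤ ∑ i, M ω i j}
      ≤ ∑ _j : Fin m, ENNReal.ofReal (rexp (- (n : ℝ) * t ^ 2 / 2)) :=
        Finset.sum_le_sum fun j _ => hcol j
    _ = m * ENNReal.ofReal (rexp (- (n : ℝ) * t ^ 2 / 2)) := by
        simp [Finset.sum_const, nsmul_eq_mul]
    _ = ENNReal.ofReal (m * rexp (- (n : ℝ) * t ^ 2 / 2)) := by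
        rw [ENNReal.ofReal_mul (by positivity), ENNReal.ofReal_natCast]
end

section
/- Let n ≥ 2 and 1 ≤ k < n, and let Q ∈ ℝ^{n×n} be drawn from the Haar measure on O_n, written in block form Q = [[Q₁, Q₂], [Q₃, Q₄]] with Q₁ of shape k×k. On the event that Q₁ is invertible and 𝟙ᵀQ₁⁻¹𝟙 ≠ 0, set v = 1/(𝟙ᵀQ₁⁻¹𝟙), y = v·Q₁⁻¹𝟙 ∈ ℝ^k, and x = v·(Q₁ᵀ)⁻¹𝟙 ∈ ℝ^k. Then the probability of the event that Q₁ is invertible, 𝟙ᵀQ₁⁻¹𝟙 ≠ 0, and both componentwise inequalities xᵀQ₂ ≤ v·𝟙ᵀ and Q₃y ≥ v·𝟙 hold, is at most 2^{k−n}. Consequently, the probability that the zero-sum game on Q is supported by the rows {1,…,k} and columns {1,…,k} is at most 2^{k−n}. -/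
open MeasureTheory Matrix

instance matrixMeasurableSpace {l o α : Type*} [MeasurableSpace α] :
    MeasurableSpace (Matrix l o α) :=
  inferInstanceAs (MeasurableSpace (l → o → α))

/-- `μ` is the Haar (uniform) probability measure on the orthogonal group `O_n`. -/
def IsOrthogonalHaar {n : ℕ} (μ : Measure (Matrix (Fin n) (Fin n) ℝ)) : Prop :=
  IsProbabilityMeasure μ ∧
  μ {Q | Qᵀ * Q = 1} = 1 ∧
  ∀ U : Matrix (Fin n) (Fin n) ℝ, Uᵀ * U = 1 →
    Measure.map (fun Q => U * Q) μ = μ ∧ Measure.map (fun Q => Q * U) μ = μ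

/-- The inclusion of the first `k` indices of `Fin n`. -/
def lowIdx {n k : ℕ} (hk : k ≤ n) (i : Fin k) : Fin n := ⟨i, lt_of_lt_of_le i.isLt hk⟩

/-- The inclusion of the last `n - k` indices of `Fin n`. -/
def highIdx {n k : ℕ} (hk : k ≤ n) (j : Fin (n - k)) : Fin n :=
  ⟨k + j.1, by have := j.isLt; omega⟩

/-- The top-left `k × k` block `Q₁` of an `n × n` matrix. -/
def block1 {n k : ℕ} (hk : k ≤ n) (Q : Matrix (Fin n) (Fin n) ℝ) :
    Matrix (Fin k) (Fin k) ℝ := Q.submatrix (lowIdx hk) (lowIdx hk)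

/-- The top-right `k × (n−k)` block `Q₂` of an `n × n` matrix. -/
def block2 {n k : ℕ} (hk : k ≤ n) (Q : Matrix (Fin n) (Fin n) ℝ) :
    Matrix (Fin k) (Fin (n - k)) ℝ := Q.submatrix (lowIdx hk) (highIdx hk)

/-- The bottom-left `(n−k) × k` block `Q₃` of an `n × n` matrix. -/
def block3 {n k : ℕ} (hk : k ≤ n) (Q : Matrix (Fin n) (Fin n) ℝ) :
    Matrix (Fin (n - k)) (Fin k) ℝ := Q.submatrix (highIdx hk) (lowIdx hk)


open scoped ENNReal NNReal

instance matrixBorelSpace {l o : Type*} [Countable l] [Countable o] :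
    BorelSpace (Matrix l o ℝ) :=
  inferInstanceAs (BorelSpace (l → o → ℝ))

/-! ### Generic helpers -/

section Helpers

variable {n k : ℕ}

lemma lowIdx_injective (hk : k ≤ n) : Function.Injective (lowIdx hk) := by
  intro i j h
  simpa [lowIdx, Fin.ext_iff] using h

lemma sum_low {M : Type*} [AddCommMonoid M] (hk : k ≤ n) (f : Fin n → M)
    (hf : ∀ j : Fin n, ¬((j : ℕ) < k) → f j = 0) :
    ∑ j, f j = ∑ i : Fin k, f (lowIdx hk i) := by
  classical
  have himg : (Finset.univ.filter (fun j : Fin n => (j : ℕ) < k)) =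
      Finset.univ.image (lowIdx hk) := by
    ext j
    simp only [Finset.mem_filter, Finset.mem_univ, true_and, Finset.mem_image]
    constructor
    · intro h; exact ⟨⟨(j : ℕ), h⟩, Fin.ext rfl⟩
    · rintro ⟨i, -, rfl⟩; exact i.isLt
  rw [← Finset.sum_filter_of_ne (p := fun j : Fin n => (j : ℕ) < k)
      (by intro x _ hx; by_contra h; exact hx (hf x h)), himg,
    Finset.sum_image (by intro a _ b _ h; exact lowIdx_injective hk h)]

lemma sum_pair_eq {f : Fin n → ℝ} {a b : Fin n} (hab : a ≠ b)
    (h : ∀ r, r ≠ a → r ≠ b → f r = 0) : ∑ r, f r = f a + f b := by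
  classical
  rw [← Finset.sum_pair hab]
  refine (Finset.sum_subset (Finset.subset_univ _) ?_).symm
  intro x _ hx
  simp only [Finset.mem_insert, Finset.mem_singleton] at hx
  push_neg at hx
  exact h x hx.1 hx.2

/-- abstract counting lemma -/
lemma count_bound {α : Type*} [MeasurableSpace α] (μ : Measure α) [IsProbabilityMeasure μ]
    {ι : Type*} [Fintype ι] [DecidableEq ι] (f : ι → α → α) (hf : ∀ i, Measurable (f i))
    (hinv : ∀ i, Measure.map (f i) μ = μ) (E : Set α) (hE : MeasurableSet E) (c : ℕ)
    (hc : ∀ x, ∀ s : Finset ι, (∀ i ∈ s, f i x ∈ E) → s.card ≤ c) :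
    (Fintype.card ι : ℝ≥0∞) * μ E ≤ c := by
  classical
  have h1 : ∀ i, μ (f i ⁻¹' E) = μ E := by
    intro i
    conv_rhs => rw [← hinv i]
    rw [Measure.map_apply (hf i) hE]
  have h2 : (Fintype.card ι : ℝ≥0∞) * μ E = ∑ i : ι, μ (f i ⁻¹' E) := by
    simp [h1, Finset.sum_const, nsmul_eq_mul]
  rw [h2]
  have h3 : ∀ i : ι, μ (f i ⁻¹' E) = ∫⁻ x, Set.indicator (f i ⁻¹' E) 1 x ∂μ := by
    intro i
    rw [lintegral_indicator_one ((hf i) hE)]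
  calc ∑ i : ι, μ (f i ⁻¹' E)
      = ∫⁻ x, ∑ i : ι, Set.indicator (f i ⁻¹' E) 1 x ∂μ := by
        rw [lintegral_finset_sum]
        · exact Finset.sum_congr rfl fun i _ => h3 i
        · intro i _
          exact (measurable_one.indicator ((hf i) hE))
    _ ≤ ∫⁻ _, (c : ℝ≥0∞) ∂μ := by
        refine lintegral_mono fun x => ?_
        have : ∑ i : ι, Set.indicator (f i ⁻¹' E) (1 : α → ℝ≥0∞) x
            = ((Finset.univ.filter (fun i => f i x ∈ E)).card : ℝ≥0∞) := by
          rw [← Finset.sum_boole]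
          refine Finset.sum_congr rfl fun i _ => ?_
          by_cases h : f i x ∈ E <;> simp [Set.indicator, h]
        rw [this]
        have := hc x (Finset.univ.filter (fun i => f i x ∈ E))
          (fun i hi => (Finset.mem_filter.mp hi).2)
        exact Nat.cast_le.mpr this
    _ = c := by simp
  
lemma eq_zero_of_forall_nat_mul_le {x : ℝ≥0∞} (hx : x ≠ ⊤) (h : ∀ M : ℕ, M * x ≤ 2) : x = 0 := by
  by_contra hx0
  have hdt : (2 : ℝ≥0∞) / x ≠ ⊤ := by
    simp only [ne_eq, ENNReal.div_eq_top]
    push_neg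
    exact ⟨fun _ => hx0, fun h2 => absurd h2 ENNReal.ofNat_ne_top⟩
  obtain ⟨M, hM⟩ := ENNReal.exists_nat_gt hdt
  have : 2 < M * x := by
    rwa [ENNReal.div_lt_iff (Or.inl hx0) (Or.inl hx)] at hM
  exact absurd (h M) (not_le.mpr this)

end Helpers

/-! ### Sign flip matrices -/

section Flips

variable {n k : ℕ}

def sgn (k : ℕ) {n : ℕ} (ε : Fin (n - k) → Bool) (i : Fin n) : ℝ :=
  if h : (i : ℕ) < k then 1
  else (if ε ⟨(i : ℕ) - k, by have := i.isLt; omega⟩ then 1 else -1)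

lemma sgn_low {ε : Fin (n - k) → Bool} {i : Fin n} (h : (i : ℕ) < k) : sgn k ε i = 1 :=
  dif_pos h

lemma sgn_mul_self (ε : Fin (n - k) → Bool) (i : Fin n) : sgn k ε i * sgn k ε i = 1 := by
  unfold sgn
  split_ifs <;> norm_num

lemma sgn_high (hk : k ≤ n) (ε : Fin (n - k) → Bool) (j : Fin (n - k)) :
    sgn k ε (highIdx hk j) = if ε j then 1 else -1 := by
  unfold sgn highIdx
  have h1 : ¬(k + j.1 < k) := by omega
  rw [dif_neg h1]
  have : (⟨k + (j : ℕ) - k, by have := j.isLt; omega⟩ : Fin (n - k)) = j := Fin.ext (show k + (j : ℕ) - k = (j : ℕ) by omega)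
  rw [this]

noncomputable def Dm (k : ℕ) {n : ℕ} (ε : Fin (n - k) → Bool) : Matrix (Fin n) (Fin n) ℝ :=
  Matrix.diagonal (sgn k ε)

lemma Dm_orth (ε : Fin (n - k) → Bool) : (Dm k ε)ᵀ * Dm k ε = 1 := by
  rw [Dm, Matrix.diagonal_transpose, Matrix.diagonal_mul_diagonal]
  simp only [sgn_mul_self]
  exact Matrix.diagonal_one

abbrev FlipPair (n k : ℕ) := (Fin (n - k) → Bool) × (Fin (n - k) → Bool)

noncomputable def flipQ (k : ℕ) {n : ℕ} (p : FlipPair n k) (Q : Matrix (Fin n) (Fin n) ℝ) :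
    Matrix (Fin n) (Fin n) ℝ := Dm k p.1 * Q * Dm k p.2

lemma flipQ_apply (p : FlipPair n k) (Q : Matrix (Fin n) (Fin n) ℝ) (i j : Fin n) :
    flipQ k p Q i j = sgn k p.1 i * Q i j * sgn k p.2 j := by
  simp only [flipQ, Dm, Matrix.mul_diagonal, Matrix.diagonal_mul]

lemma block1_flip (hk : k ≤ n) (p : FlipPair n k) (Q : Matrix (Fin n) (Fin n) ℝ) :
    block1 hk (flipQ k p Q) = block1 hk Q := by
  ext i j
  simp only [block1, Matrix.submatrix_apply, flipQ_apply]
  rw [sgn_low (ε := p.1) (i := lowIdx hk i) i.isLt, sgn_low (ε := p.2) (i := lowIdx hk j) j.isLt]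
  ring

lemma block2_flip (hk : k ≤ n) (p : FlipPair n k) (Q : Matrix (Fin n) (Fin n) ℝ)
    (i : Fin k) (j : Fin (n - k)) :
    block2 hk (flipQ k p Q) i j = block2 hk Q i j * (if p.2 j then 1 else -1) := by
  simp only [block2, Matrix.submatrix_apply, flipQ_apply]
  rw [sgn_low (ε := p.1) (i := lowIdx hk i) i.isLt, sgn_high hk]
  ring

lemma block3_flip (hk : k ≤ n) (p : FlipPair n k) (Q : Matrix (Fin n) (Fin n) ℝ)
    (i : Fin (n - k)) (j : Fin k) :
    block3 hk (flipQ k p Q) i j = block3 hk Q i j * (if p.1 i then 1 else -1) := by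
  simp only [block3, Matrix.submatrix_apply, flipQ_apply]
  rw [sgn_low (ε := p.2) (i := lowIdx hk j) j.isLt, sgn_high hk]
  ring

lemma flipQ_measurable (p : FlipPair n k) :
    Measurable (fun Q : Matrix (Fin n) (Fin n) ℝ => flipQ k p Q) := by
  have : Continuous (fun Q : Matrix (Fin n) (Fin n) ℝ => Dm k p.1 * Q * Dm k p.2) :=
    (continuous_const.matrix_mul continuous_id).matrix_mul continuous_const
  exact this.measurable

lemma flipQ_map_eq {μ : Measure (Matrix (Fin n) (Fin n) ℝ)} (hμ : IsOrthogonalHaar μ)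
    (p : FlipPair n k) : Measure.map (flipQ k p) μ = μ := by
  have h1 := (hμ.2.2 (Dm k p.1) (Dm_orth p.1)).1
  have h2 := (hμ.2.2 (Dm k p.2) (Dm_orth p.2)).2
  have hcomp : flipQ k p = (fun Q => Q * Dm k p.2) ∘ (fun Q => Dm k p.1 * Q) := rfl
  have mg : Measurable (fun Q : Matrix (Fin n) (Fin n) ℝ => Q * Dm k p.2) :=
    (continuous_id.matrix_mul continuous_const).measurable
  have mf : Measurable (fun Q : Matrix (Fin n) (Fin n) ℝ => Dm k p.1 * Q) :=
    (continuous_const.matrix_mul continuous_id).measurable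
  rw [hcomp, ← Measure.map_map mg mf, h1, h2]

end Flips

/-! ### Plane rotations -/

section Rot

variable {n : ℕ} {a b q : Fin n}

noncomputable def rotM (a b : Fin n) (t : ℝ) : Matrix (Fin n) (Fin n) ℝ :=
  Matrix.of fun p q =>
    if p = a then (if q = a then Real.cos t else if q = b then -Real.sin t else 0)
    else if p = b then (if q = a then Real.sin t else if q = b then Real.cos t else 0)
    else if p = q then 1 else 0

lemma rotM_aa {t : ℝ} : rotM a b t a a = Real.cos t := by simp [rotM]
lemma rotM_ab (hab : a ≠ b) {t : ℝ} : rotM a b t a b = -Real.sin t := by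
  simp [rotM, hab, Ne.symm hab]
lemma rotM_ba (hab : a ≠ b) {t : ℝ} : rotM a b t b a = Real.sin t := by
  simp [rotM, hab, Ne.symm hab]
lemma rotM_bb (hab : a ≠ b) {t : ℝ} : rotM a b t b b = Real.cos t := by
  simp [rotM, hab, Ne.symm hab]
lemma rotM_a_other (hab : a ≠ b) (t : ℝ) (hqa : q ≠ a) (hqb : q ≠ b) : rotM a b t a q = 0 := by
  simp [rotM, hqa, hqb, hqa.symm, hqb.symm]
lemma rotM_b_other (hab : a ≠ b) (t : ℝ) (hqa : q ≠ a) (hqb : q ≠ b) : rotM a b t b q = 0 := by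
  simp [rotM, hab, Ne.symm hab, hqa, hqb, hqa.symm, hqb.symm]
lemma rotM_apply_ne (hab : a ≠ b) (t : ℝ) {r : Fin n} (hra : r ≠ a) (hrb : r ≠ b) :
    rotM a b t r q = if r = q then 1 else 0 := by
  simp only [rotM, Matrix.of_apply, if_neg hra, if_neg hrb]

lemma rotM_orth (hab : a ≠ b) (t : ℝ) : (rotM a b t)ᵀ * rotM a b t = 1 := by
  ext p q
  rw [Matrix.mul_apply]
  simp only [Matrix.transpose_apply]
  rcases eq_or_ne p a with hpa | hpa
  · subst hpa
    rw [sum_pair_eq hab (fun r hra hrb => by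
      rw [rotM_apply_ne hab t hra hrb, if_neg hra, zero_mul])]
    rcases eq_or_ne q p with hqa | hqa
    · subst hqa
      rw [rotM_aa, rotM_ba hab, Matrix.one_apply_eq]
      nlinarith [Real.sin_sq_add_cos_sq t]
    · rcases eq_or_ne q b with hqb | hqb
      · subst hqb
        rw [rotM_aa, rotM_ab hab, rotM_ba hab, rotM_bb hab, Matrix.one_apply_ne (Ne.symm hqa)]
        ring
      · rw [rotM_a_other hab t hqa hqb, rotM_b_other hab t hqa hqb,
          Matrix.one_apply_ne (Ne.symm hqa)]
        ring
  · rcases eq_or_ne p b with hpb | hpb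
    · subst hpb
      rw [sum_pair_eq hab (fun r hra hrb => by
        rw [rotM_apply_ne hab t hra hrb, if_neg hrb, zero_mul])]
      rcases eq_or_ne q a with hqa | hqa
      · subst hqa
        rw [rotM_aa, rotM_ab hab, rotM_ba hab, rotM_bb hab, Matrix.one_apply_ne hpa]
        ring
      · rcases eq_or_ne q p with hqb | hqb
        · subst hqb
          rw [rotM_ab hab, rotM_bb hab, Matrix.one_apply_eq]
          nlinarith [Real.sin_sq_add_cos_sq t]
        · rw [rotM_a_other hab t hqa hqb, rotM_b_other hab t hqa hqb,
            Matrix.one_apply_ne (Ne.symm hqb)]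
          ring
    · rw [Finset.sum_eq_single p (fun r _ hrp => ?_) (fun h => absurd (Finset.mem_univ p) h)]
      · rw [rotM_apply_ne hab t hpa hpb, if_pos rfl, one_mul,
          rotM_apply_ne hab t hpa hpb, Matrix.one_apply]
      · rcases eq_or_ne r a with hra | hra
        · subst hra
          rw [rotM_a_other hab t hpa hpb, zero_mul]
        · rcases eq_or_ne r b with hrb | hrb
          · subst hrb
            rw [rotM_b_other hab t hpa hpb, zero_mul]
          · rw [rotM_apply_ne hab t hra hrb, if_neg hrp, zero_mul]

lemma mul_rotM_col_a (hab : a ≠ b) (t : ℝ) (Q : Matrix (Fin n) (Fin n) ℝ) (p : Fin n) :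
    (Q * rotM a b t) p a = Real.cos t * Q p a + Real.sin t * Q p b := by
  rw [Matrix.mul_apply]
  rw [sum_pair_eq hab (fun r hra hrb => by
    rw [rotM_apply_ne hab t hra hrb, if_neg hra, mul_zero])]
  rw [rotM_aa, rotM_ba hab]
  ring

lemma mul_rotM_col_b (hab : a ≠ b) (t : ℝ) (Q : Matrix (Fin n) (Fin n) ℝ) (p : Fin n) :
    (Q * rotM a b t) p b = -Real.sin t * Q p a + Real.cos t * Q p b := by
  rw [Matrix.mul_apply]
  rw [sum_pair_eq hab (fun r hra hrb => by
    rw [rotM_apply_ne hab t hra hrb, if_neg hrb, mul_zero])]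
  rw [rotM_ab hab, rotM_bb hab]
  ring

lemma mul_rotM_col_other (hab : a ≠ b) (t : ℝ) (Q : Matrix (Fin n) (Fin n) ℝ) (p : Fin n)
    (hqa : q ≠ a) (hqb : q ≠ b) : (Q * rotM a b t) p q = Q p q := by
  rw [Matrix.mul_apply]
  rw [Finset.sum_eq_single q (fun r _ hrq => ?_) (fun h => absurd (Finset.mem_univ q) h)]
  · rw [rotM_apply_ne hab t hqa hqb, if_pos rfl, mul_one]
  · rcases eq_or_ne r a with hra | hra
    · subst hra
      rw [rotM_a_other hab t hqa hqb, mul_zero]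
    · rcases eq_or_ne r b with hrb | hrb
      · subst hrb
        rw [rotM_b_other hab t hqa hqb, mul_zero]
      · rw [rotM_apply_ne hab t hra hrb, if_neg hrq, mul_zero]

end Rot

/-! ### The singular-block event is null -/

section NullSingular

variable {n k : ℕ}

/-- column `i` of the top `k` rows. -/
def colT (hk : k ≤ n) (Q : Matrix (Fin n) (Fin n) ℝ) (i : Fin n) : Fin k → ℝ :=
  fun r => Q (lowIdx hk r) i

def spanBelow (hk : k ≤ n) (Q : Matrix (Fin n) (Fin n) ℝ) (a : Fin n) :
    Submodule ℝ (Fin k → ℝ) :=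
  Submodule.span ℝ (Set.range (fun i : Fin n => if i < a then colT hk Q i else 0))

def Cset (hk : k ≤ n) (a m : Fin n) : Set (Matrix (Fin n) (Fin n) ℝ) :=
  {Q | colT hk Q a ∈ spanBelow hk Q a ∧ colT hk Q m ∉ spanBelow hk Q a}

lemma colT_rot_other (hk : k ≤ n) {a b : Fin n} (hab : a ≠ b) (t : ℝ) (Q : Matrix (Fin n) (Fin n) ℝ)
    {i : Fin n} (hia : i ≠ a) (hib : i ≠ b) : colT hk (Q * rotM a b t) i = colT hk Q i :=
  funext fun r => mul_rotM_col_other hab t Q _ hia hib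

lemma colT_rot_a (hk : k ≤ n) {a b : Fin n} (hab : a ≠ b) (t : ℝ) (Q : Matrix (Fin n) (Fin n) ℝ) :
    colT hk (Q * rotM a b t) a = Real.cos t • colT hk Q a + Real.sin t • colT hk Q b :=
  funext fun r => mul_rotM_col_a hab t Q _

lemma colT_rot_b (hk : k ≤ n) {a b : Fin n} (hab : a ≠ b) (t : ℝ) (Q : Matrix (Fin n) (Fin n) ℝ) :
    colT hk (Q * rotM a b t) b = -Real.sin t • colT hk Q a + Real.cos t • colT hk Q b :=
  funext fun r => mul_rotM_col_b hab t Q _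

lemma spanBelow_rot (hk : k ≤ n) {a b c : Fin n} (hab : a ≠ b) (t : ℝ)
    (Q : Matrix (Fin n) (Fin n) ℝ) (ha : ¬ a < c) (hb : ¬ b < c) :
    spanBelow hk (Q * rotM a b t) c = spanBelow hk Q c := by
  have hgen : (fun i => if i < c then colT hk (Q * rotM a b t) i else 0)
      = (fun i : Fin n => if i < c then colT hk Q i else 0) := by
    funext i
    by_cases h : i < c
    · rw [if_pos h, if_pos h, colT_rot_other hk hab t Q (fun hia => ha (hia ▸ h))
        (fun hib => hb (hib ▸ h))]
    · rw [if_neg h, if_neg h]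
  unfold spanBelow
  rw [hgen]

/-- the key two-out-of-many section bound -/
lemma rot_section_card (hk : k ≤ n) {a m : Fin n} (ham : a < m) (Q : Matrix (Fin n) (Fin n) ℝ)
    (s : Finset ℝ) (hs : ∀ t ∈ s, t ∈ Set.Ico (0:ℝ) (2 * Real.pi))
    (hmem : ∀ t ∈ s, Q * rotM a m t ∈ Cset hk a m) : s.card ≤ 2 := by
  have ham' : a ≠ m := ham.ne
  set cA := colT hk Q a with hcA
  set cM := colT hk Q m with hcM
  set S := spanBelow hk Q a with hS
  have hv : ∀ t ∈ s, Real.cos t • cA + Real.sin t • cM ∈ S := by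
    intro t ht
    have h1 := (hmem t ht).1
    rwa [colT_rot_a hk ham' t Q, spanBelow_rot hk ham' t Q (lt_irrefl a) (fun h => absurd (ham.trans h) (lt_irrefl a))] at h1
  have hw : ∀ t ∈ s, -Real.sin t • cA + Real.cos t • cM ∉ S := by
    intro t ht
    have h2 := (hmem t ht).2
    rwa [colT_rot_b hk ham' t Q, spanBelow_rot hk ham' t Q (lt_irrefl a) (fun h => absurd (ham.trans h) (lt_irrefl a))] at h2
  -- pairwise: sin (t' - t) = 0
  have hpair : ∀ t ∈ s, ∀ t' ∈ s, Real.sin (t' - t) = 0 := by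
    intro t ht t' ht'
    by_contra hdet0
    set d := Real.cos t * Real.sin t' - Real.cos t' * Real.sin t with hd
    have hdd : d ≠ 0 := by
      rw [hd]
      intro h
      apply hdet0
      rw [Real.sin_sub]
      linarith [h]
    have hA : cA ∈ S := by
      have h1 : d • cA = Real.sin t' • (Real.cos t • cA + Real.sin t • cM)
          - Real.sin t • (Real.cos t' • cA + Real.sin t' • cM) := by
        funext r
        simp only [Pi.smul_apply, Pi.add_apply, Pi.sub_apply, smul_eq_mul]
        ring
      have h2 : cA = d⁻¹ • (Real.sin t' • (Real.cos t • cA + Real.sin t • cM)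
          - Real.sin t • (Real.cos t' • cA + Real.sin t' • cM)) := by
        rw [← h1, smul_smul, inv_mul_cancel₀ hdd, one_smul]
      rw [h2]
      exact S.smul_mem _ (S.sub_mem (S.smul_mem _ (hv t ht)) (S.smul_mem _ (hv t' ht')))
    have hM : cM ∈ S := by
      have h1 : d • cM = Real.cos t • (Real.cos t' • cA + Real.sin t' • cM)
          - Real.cos t' • (Real.cos t • cA + Real.sin t • cM) := by
        funext r
        simp only [Pi.smul_apply, Pi.add_apply, Pi.sub_apply, smul_eq_mul]
        ring
      have h2 : cM = d⁻¹ • (Real.cos t • (Real.cos t' • cA + Real.sin t' • cM)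
          - Real.cos t' • (Real.cos t • cA + Real.sin t • cM)) := by
        rw [← h1, smul_smul, inv_mul_cancel₀ hdd, one_smul]
      rw [h2]
      exact S.smul_mem _ (S.sub_mem (S.smul_mem _ (hv t' ht')) (S.smul_mem _ (hv t ht)))
    exact hw t ht (S.add_mem (S.smul_mem _ hA) (S.smul_mem _ hM))
  -- distinct elements differ by ±π
  have hdiff : ∀ t ∈ s, ∀ t' ∈ s, t ≠ t' → t' - t = Real.pi ∨ t' - t = -Real.pi := by
    intro t ht t' ht' htt
    obtain ⟨z, hz⟩ := Real.sin_eq_zero_iff.mp (hpair t ht t' ht')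
    have hpi := Real.pi_pos
    obtain ⟨h1, h2⟩ := hs t ht
    obtain ⟨h1', h2'⟩ := hs t' ht'
    have hz2 : (z : ℝ) < 2 := by nlinarith
    have hz3 : (-2 : ℝ) < z := by nlinarith
    have hz0 : z ≠ 0 := by
      intro h
      rw [h] at hz
      simp at hz
      exact htt (by linarith)
    have hz2' : z < 2 := by exact_mod_cast hz2
    have hz3' : (-2 : ℤ) < z := by exact_mod_cast hz3
    interval_cases z
    · right; push_cast at hz; linarith
    · exact absurd rfl hz0
    · left; push_cast at hz; linarith
  by_contra hcard
  push_neg at hcard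
  obtain ⟨t₁, t₂, t₃, h1, h2, h3, h12, h13, h23⟩ := Finset.two_lt_card_iff.mp hcard
  have d12 := hdiff t₁ h1 t₂ h2 h12
  have d13 := hdiff t₁ h1 t₃ h3 h13
  have d23 := hdiff t₂ h2 t₃ h3 h23
  have hpi := Real.pi_pos
  rcases d12 with e | e <;> rcases d13 with f | f <;> rcases d23 with g | g <;> linarith

lemma continuous_colT (hk : k ≤ n) (i : Fin n) :
    Continuous fun Q : Matrix (Fin n) (Fin n) ℝ => colT hk Q i :=
  continuous_pi fun r => continuous_id.matrix_elem (lowIdx hk r) i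

lemma continuous_gQ (hk : k ≤ n) (a i : Fin n) :
    Continuous fun Q : Matrix (Fin n) (Fin n) ℝ =>
      (if i < a then colT hk Q i else 0 : Fin k → ℝ) := by
  by_cases h : i < a
  · simpa [h] using continuous_colT hk i
  · simpa [h] using continuous_const

lemma measurable_mem_span (hk : k ≤ n) (a m : Fin n) :
    MeasurableSet {Q : Matrix (Fin n) (Fin n) ℝ | colT hk Q m ∈ spanBelow hk Q a} := by
  classical
  have key : {Q : Matrix (Fin n) (Fin n) ℝ | colT hk Q m ∈ spanBelow hk Q a}
      = ⋂ N : ℕ, ⋃ c : Fin n → ℚ,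
        {Q | dist (colT hk Q m)
          (∑ i : Fin n, (c i : ℝ) • (if i < a then colT hk Q i else 0)) < 1 / (N + 1)} := by
    ext Q
    simp only [Set.mem_setOf_eq, Set.mem_iInter, Set.mem_iUnion]
    constructor
    · intro hmem N
      obtain ⟨c, hc⟩ := (Submodule.mem_span_range_iff_exists_fun ℝ).mp hmem
      have hε : (0 : ℝ) < 1 / (N + 1) := by positivity
      set g : Fin n → Fin k → ℝ := fun i => if i < a then colT hk Q i else 0 with hg
      set B : ℝ := ∑ i : Fin n, (‖g i‖ + 1) with hB
      have hB0 : 0 ≤ B := Finset.sum_nonneg fun i _ => by positivity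
      have hq : ∀ i : Fin n, ∃ q : ℚ, |c i - (q : ℝ)| < (1 / (N + 1)) / (2 * (B + 1)) := by
        intro i
        exact exists_rat_near (c i) (by positivity)
      choose q hq using hq
      refine ⟨q, ?_⟩
      have h1 : dist (colT hk Q m) (∑ i : Fin n, (q i : ℝ) • g i)
          = ‖∑ i : Fin n, (c i - (q i : ℝ)) • g i‖ := by
        rw [dist_eq_norm, ← hc]
        congr 1
        rw [← Finset.sum_sub_distrib]
        exact Finset.sum_congr rfl fun i _ => by rw [sub_smul]
      rw [h1]
      calc ‖∑ i : Fin n, (c i - (q i : ℝ)) • g i‖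
          ≤ ∑ i : Fin n, ‖(c i - (q i : ℝ)) • g i‖ := norm_sum_le _ _
        _ ≤ ∑ i : Fin n, ((1 / (N + 1)) / (2 * (B + 1))) * (‖g i‖ + 1) := by
            refine Finset.sum_le_sum fun i _ => ?_
            rw [norm_smul]
            have h2 : ‖c i - (q i : ℝ)‖ ≤ (1 / (N + 1)) / (2 * (B + 1)) :=
              le_of_lt (by rw [Real.norm_eq_abs]; exact hq i)
            have h3 : ‖g i‖ ≤ ‖g i‖ + 1 := by linarith
            exact mul_le_mul h2 h3 (norm_nonneg _) (by positivity)
        _ = ((1 / (N + 1)) / (2 * (B + 1))) * B := by rw [← Finset.mul_sum]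
        _ < 1 / (N + 1) := by
            rw [div_mul_eq_mul_div, div_lt_iff₀ (by positivity)]
            have : B < 2 * (B + 1) := by linarith
            nlinarith [hε]
    · intro happ
      have hclosed : IsClosed ((spanBelow hk Q a : Set (Fin k → ℝ))) :=
        Submodule.closed_of_finiteDimensional _
      have : colT hk Q m ∈ closure ((spanBelow hk Q a : Set (Fin k → ℝ))) := by
        rw [Metric.mem_closure_iff]
        intro ε hε
        obtain ⟨N, hN⟩ := exists_nat_one_div_lt hε
        obtain ⟨c, hc⟩ := happ N
        refine ⟨∑ i : Fin n, (c i : ℝ) • (if i < a then colT hk Q i else 0), ?_, ?_⟩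
        · exact Submodule.sum_mem _ fun i _ => Submodule.smul_mem _ _
            (Submodule.subset_span ⟨i, rfl⟩)
        · exact lt_trans hc (by exact_mod_cast hN)
      rwa [hclosed.closure_eq] at this
  rw [key]
  refine MeasurableSet.iInter fun N => MeasurableSet.iUnion fun c => ?_
  have hcont : Continuous fun Q : Matrix (Fin n) (Fin n) ℝ =>
      dist (colT hk Q m) (∑ i : Fin n, (c i : ℝ) • (if i < a then colT hk Q i else 0)) := by
    refine Continuous.dist (continuous_colT hk m) ?_
    refine continuous_finset_sum _ fun i _ => ?_
    exact (continuous_const : Continuous fun _ : Matrix (Fin n) (Fin n) ℝ => (c i : ℝ)).smul (continuous_gQ hk a i)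
  exact (isOpen_lt hcont continuous_const).measurableSet

lemma Cset_measurable (hk : k ≤ n) (a m : Fin n) : MeasurableSet (Cset hk a m) :=
  (measurable_mem_span hk a a).inter (measurable_mem_span hk a m).compl

lemma Cset_null {μ : Measure (Matrix (Fin n) (Fin n) ℝ)} (hμ : IsOrthogonalHaar μ)
    (hk : k ≤ n) {a m : Fin n} (ham : a < m) : μ (Cset hk a m) = 0 := by
  haveI := hμ.1
  apply eq_zero_of_forall_nat_mul_le (measure_ne_top μ _)
  intro M
  rcases Nat.eq_zero_or_pos M with hM | hM
  · simp [hM]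
  set θ : Fin M → ℝ := fun i => 2 * Real.pi * i / M with hθ
  have hpi := Real.pi_pos
  have hθrange : ∀ i : Fin M, θ i ∈ Set.Ico (0 : ℝ) (2 * Real.pi) := by
    intro i
    constructor
    · apply div_nonneg (by positivity) (by positivity)
    · rw [div_lt_iff₀ (by exact_mod_cast hM)]
      have : (i : ℝ) < M := by exact_mod_cast i.isLt
      nlinarith
  have hθinj : Function.Injective θ := by
    intro i j hij
    simp only [hθ] at hij
    have hM' : (0:ℝ) < M := by exact_mod_cast hM
    have h1 : 2 * Real.pi * (i:ℝ) = 2 * Real.pi * (j:ℝ) := by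
      have h0 := congrArg (fun x : ℝ => x * (M:ℝ)) hij
      simpa [div_mul_cancel₀, ne_of_gt hM'] using h0
    have h2 : (i : ℝ) = (j : ℝ) := mul_left_cancel₀ (by positivity) h1
    have h3 : (i : ℕ) = (j : ℕ) := Nat.cast_injective h2
    exact Fin.ext h3
  have hcount := count_bound μ (fun i Q => Q * rotM a m (θ i))
    (fun i => (continuous_id.matrix_mul continuous_const).measurable)
    (fun i => (hμ.2.2 _ (rotM_orth ham.ne (θ i))).2)
    (Cset hk a m) (Cset_measurable hk a m) 2 ?_
  · simpa [Fintype.card_fin] using hcount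
  · intro Q s hsmem
    classical
    have himg := rot_section_card hk ham Q (s.image θ)
      (fun t ht => by
        obtain ⟨i, _, rfl⟩ := Finset.mem_image.mp ht
        exact hθrange i)
      (fun t ht => by
        obtain ⟨i, hi, rfl⟩ := Finset.mem_image.mp ht
        exact hsmem i hi)
    rwa [Finset.card_image_of_injective s hθinj] at himg

lemma mem_spanBelow_of_combo (hk : k ≤ n) (Q : Matrix (Fin n) (Fin n) ℝ) (a : Fin n)
    (c : Fin n → ℝ) (hc : ∀ i, ¬(i < a) → c i = 0) (v : Fin k → ℝ)
    (h : ∑ i : Fin n, c i • colT hk Q i = v) : v ∈ spanBelow hk Q a := by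
  rw [spanBelow, Submodule.mem_span_range_iff_exists_fun]
  refine ⟨c, ?_⟩
  rw [← h]
  refine Finset.sum_congr rfl fun i _ => ?_
  by_cases hi : i < a
  · rw [if_pos hi]
  · rw [if_neg hi, hc i hi, zero_smul, zero_smul]

lemma covering (hk1 : 1 ≤ k) (hkn : k ≤ n) (Q : Matrix (Fin n) (Fin n) ℝ)
    (horth : Qᵀ * Q = 1) (hdet : ¬ IsUnit (block1 hkn Q).det) :
    ∃ a m : Fin n, a < m ∧ Q ∈ Cset hkn a m := by
  classical
  have hdet0 : (block1 hkn Q).det = 0 := by rwa [isUnit_iff_ne_zero, not_not] at hdet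
  obtain ⟨v, hv0, hvz⟩ := (Matrix.exists_mulVec_eq_zero_iff).mpr hdet0
  set cc : Fin k → (Fin k → ℝ) := fun i => colT hkn Q (lowIdx hkn i) with hcc
  have hsum : ∑ i : Fin k, v i • cc i = 0 := by
    funext r
    have h1 := congrFun hvz r
    simp only [Matrix.mulVec, dotProduct, Pi.zero_apply] at h1
    simp only [Finset.sum_apply, Pi.smul_apply, Pi.zero_apply, smul_eq_mul]
    rw [← h1]
    refine Finset.sum_congr rfl fun i _ => ?_
    simp only [hcc, colT, block1, Matrix.submatrix_apply]
    ring
  set F := Finset.univ.filter (fun i : Fin k => v i ≠ 0) with hF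
  have hFne : F.Nonempty := by
    by_contra hne
    apply hv0
    funext i
    by_contra hvi
    exact hne ⟨i, Finset.mem_filter.mpr ⟨Finset.mem_univ i, hvi⟩⟩
  set ℓ := F.max' hFne with hℓ
  have hℓv : v ℓ ≠ 0 := (Finset.mem_filter.mp (F.max'_mem hFne)).2
  have hmax : ∀ i : Fin k, ℓ < i → v i = 0 := by
    intro i hi
    by_contra hvi
    exact absurd (F.le_max' i (Finset.mem_filter.mpr ⟨Finset.mem_univ i, hvi⟩)) (not_le.mpr hi)
  set a : Fin n := lowIdx hkn ℓ with ha
  -- the coefficient function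
  set co : Fin n → ℝ := fun j =>
    if h : (j : ℕ) < k then (if (⟨(j : ℕ), h⟩ : Fin k) = ℓ then 0 else -(v ℓ)⁻¹ * v ⟨(j : ℕ), h⟩)
    else 0 with hco
  have hco_zero : ∀ j : Fin n, ¬(j < a) → co j = 0 := by
    intro j hj
    have hja : (a : ℕ) ≤ (j : ℕ) := not_lt.mp hj
    simp only [hco]
    by_cases h : (j : ℕ) < k
    · rw [dif_pos h]
      by_cases he : (⟨(j : ℕ), h⟩ : Fin k) = ℓ
      · rw [if_pos he]
      · rw [if_neg he]
        have hlt : ℓ < (⟨(j : ℕ), h⟩ : Fin k) := by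
          rcases lt_or_eq_of_le (show ℓ ≤ (⟨(j : ℕ), h⟩ : Fin k) from hja) with h' | h'
          · exact h'
          · exact absurd h'.symm he
        rw [hmax _ hlt, mul_zero]
    · rw [dif_neg h]
  have hmemA : colT hkn Q a ∈ spanBelow hkn Q a := by
    refine mem_spanBelow_of_combo hkn Q a co hco_zero _ ?_
    have hlow : ∑ j : Fin n, co j • colT hkn Q j = ∑ i : Fin k, co (lowIdx hkn i) • cc i := by
      refine sum_low hkn _ fun j hj => ?_
      simp only [hco]
      rw [dif_neg hj, zero_smul]
    rw [hlow]
    have hcl : ∀ i : Fin k, co (lowIdx hkn i) = if i = ℓ then 0 else -(v ℓ)⁻¹ * v i := by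
      intro i
      simp only [hco, lowIdx]
      rw [dif_pos i.isLt]
    have hstep : ∑ i : Fin k, co (lowIdx hkn i) • cc i
        = ∑ i ∈ Finset.univ.erase ℓ, (-(v ℓ)⁻¹ * v i) • cc i := by
      rw [← Finset.add_sum_erase _ _ (Finset.mem_univ ℓ)]
      rw [hcl ℓ, if_pos rfl, zero_smul, zero_add]
      refine Finset.sum_congr rfl fun i hi => ?_
      rw [hcl i, if_neg (Finset.ne_of_mem_erase hi)]
    rw [hstep]
    have herase : ∑ i ∈ Finset.univ.erase ℓ, v i • cc i = -(v ℓ • cc ℓ) := by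
      have := Finset.add_sum_erase Finset.univ (fun i => v i • cc i) (Finset.mem_univ ℓ)
      rw [hsum] at this
      linear_combination (norm := module) this
    calc ∑ i ∈ Finset.univ.erase ℓ, (-(v ℓ)⁻¹ * v i) • cc i
        = ∑ i ∈ Finset.univ.erase ℓ, (-(v ℓ)⁻¹) • (v i • cc i) := by
          refine Finset.sum_congr rfl fun i _ => ?_
          rw [smul_smul]
      _ = (-(v ℓ)⁻¹) • ∑ i ∈ Finset.univ.erase ℓ, v i • cc i := by rw [Finset.smul_sum]
      _ = (-(v ℓ)⁻¹) • (-(v ℓ • cc ℓ)) := by rw [herase]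
      _ = colT hkn Q a := by
          rw [smul_neg, neg_smul, neg_neg, smul_smul, inv_mul_cancel₀ hℓv, one_smul]
  -- existence of a column outside the span
  have hex : ∃ m : Fin n, colT hkn Q m ∉ spanBelow hkn Q a := by
    by_contra hall
    push_neg at hall
    set S := spanBelow hkn Q a with hSdef
    have horth2 : Q * Qᵀ = 1 := mul_eq_one_comm.mp horth
    have hdelta : ∀ r s : Fin k, ∑ i : Fin n, Q (lowIdx hkn r) i * Q (lowIdx hkn s) i
        = if r = s then 1 else 0 := by
      intro r s
      have h1 := congrFun (congrFun horth2 (lowIdx hkn r)) (lowIdx hkn s)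
      rw [Matrix.mul_apply] at h1
      simp only [Matrix.transpose_apply] at h1
      rw [h1, Matrix.one_apply]
      by_cases h : r = s
      · rw [if_pos (by rw [h]), if_pos h]
      · rw [if_neg (fun hh => h (lowIdx_injective hkn hh)), if_neg h]
    have htop : ∀ u : Fin k → ℝ, u ∈ S := by
      intro u
      have hrep : u = ∑ i : Fin n, (∑ s : Fin k, u s * Q (lowIdx hkn s) i) • colT hkn Q i := by
        funext r
        simp only [Finset.sum_apply, Pi.smul_apply, smul_eq_mul, colT]
        simp only [Finset.sum_mul]
        rw [Finset.sum_comm]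
        have hstep : ∀ s : Fin k, ∑ i : Fin n, u s * Q (lowIdx hkn s) i * Q (lowIdx hkn r) i
            = u s * (if s = r then 1 else 0) := by
          intro s
          rw [← hdelta s r, Finset.mul_sum]
          exact Finset.sum_congr rfl fun i _ => by ring
        simp only [hstep]
        simp [mul_ite, mul_one, mul_zero, Finset.sum_ite_eq']
      rw [hrep]
      exact Submodule.sum_mem _ fun i _ => S.smul_mem _ (hall i)
    -- dimension contradiction
    have hS_le : S ≤ Submodule.span ℝ (colT hkn Q '' Set.Iio a) := by
      rw [hSdef, spanBelow]
      refine Submodule.span_le.mpr ?_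
      rintro x ⟨i, rfl⟩
      dsimp only
      by_cases h : i < a
      · rw [if_pos h]
        exact Submodule.subset_span ⟨i, h, rfl⟩
      · rw [if_neg h]
        exact Submodule.zero_mem _
    haveI : Fintype ↥(colT hkn Q '' Set.Iio a) := Fintype.ofFinite _
    have hrank1 : Module.finrank ℝ ↥(Submodule.span ℝ (colT hkn Q '' Set.Iio a))
        ≤ (colT hkn Q '' Set.Iio a).toFinset.card := finrank_span_le_card _
    have hcard : (colT hkn Q '' Set.Iio a).toFinset.card ≤ (a : ℕ) := by
      rw [Set.toFinset_image]
      calc ((Set.Iio a).toFinset.image (colT hkn Q)).card ≤ (Set.Iio a).toFinset.card :=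
            Finset.card_image_le
        _ = (a : ℕ) := by rw [Set.toFinset_Iio, Fin.card_Iio]
    have htop' : S = ⊤ := eq_top_iff.mpr fun u _ => htop u
    have h1 : Module.finrank ℝ ↥S = k := by
      rw [htop', finrank_top, Module.finrank_fintype_fun_eq_card]
      simp
    have h2 : Module.finrank ℝ ↥S ≤ Module.finrank ℝ
        ↥(Submodule.span ℝ (colT hkn Q '' Set.Iio a)) := Submodule.finrank_mono hS_le
    have h3 : (a : ℕ) < k := by
      simp only [ha, lowIdx]
      exact ℓ.isLt
    omega
  obtain ⟨m, hm⟩ := hex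
  have hma : ¬ m < a := by
    intro h
    exact hm (Submodule.subset_span ⟨m, by dsimp only; rw [if_pos h]⟩)
  have hne : m ≠ a := by
    intro h
    rw [h] at hm
    exact hm hmemA
  exact ⟨a, m, lt_of_le_of_ne (le_of_not_gt hma) hne.symm, hmemA, hm⟩

lemma null_singular {μ : Measure (Matrix (Fin n) (Fin n) ℝ)} (hμ : IsOrthogonalHaar μ)
    (hk1 : 1 ≤ k) (hkn : k ≤ n) :
    μ {Q : Matrix (Fin n) (Fin n) ℝ | Qᵀ * Q = 1 ∧ ¬ IsUnit (block1 hkn Q).det} = 0 := by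
  have hsub : {Q : Matrix (Fin n) (Fin n) ℝ | Qᵀ * Q = 1 ∧ ¬ IsUnit (block1 hkn Q).det}
      ⊆ ⋃ (p : Fin n × Fin n) (_ : p.1 < p.2), Cset hkn p.1 p.2 := by
    intro Q hQ
    obtain ⟨a, m, ham, hmem⟩ := covering hk1 hkn Q hQ.1 hQ.2
    exact Set.mem_iUnion.mpr ⟨(a, m), Set.mem_iUnion.mpr ⟨ham, hmem⟩⟩
  refine measure_mono_null hsub ?_
  refine measure_iUnion_null fun p => ?_
  refine measure_iUnion_null fun hp => ?_
  exact Cset_null hμ hkn hp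

end NullSingular

/-! ### The events -/

section Events

variable {n k : ℕ}

def E1 (hkn : k ≤ n) : Set (Matrix (Fin n) (Fin n) ℝ) :=
  {Q | IsUnit (block1 hkn Q).det ∧
      ((fun _ => (1 : ℝ)) ⬝ᵥ (block1 hkn Q)⁻¹.mulVec fun _ => (1 : ℝ)) ≠ 0 ∧
      (∀ j, (((1 / ((fun _ => (1 : ℝ)) ⬝ᵥ (block1 hkn Q)⁻¹.mulVec fun _ => (1 : ℝ))) •
            ((block1 hkn Q)ᵀ)⁻¹.mulVec fun _ => (1 : ℝ)) ᵥ* block2 hkn Q) j ≤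
          1 / ((fun _ => (1 : ℝ)) ⬝ᵥ (block1 hkn Q)⁻¹.mulVec fun _ => (1 : ℝ))) ∧
      (∀ i, 1 / ((fun _ => (1 : ℝ)) ⬝ᵥ (block1 hkn Q)⁻¹.mulVec fun _ => (1 : ℝ)) ≤
          ((block3 hkn Q).mulVec
            ((1 / ((fun _ => (1 : ℝ)) ⬝ᵥ (block1 hkn Q)⁻¹.mulVec fun _ => (1 : ℝ))) •
              (block1 hkn Q)⁻¹.mulVec fun _ => (1 : ℝ))) i)}

def E2 (n k : ℕ) : Set (Matrix (Fin n) (Fin n) ℝ) :=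
  {Q | ∃ x ∈ stdSimplex ℝ (Fin n), ∃ y ∈ stdSimplex ℝ (Fin n),
      (∀ j, (x ᵥ* Q) j ≤ gameValue Q) ∧
      (∀ i, gameValue Q ≤ Q.mulVec y i) ∧
      (∀ i : Fin n, x i ≠ 0 ↔ (i : ℕ) < k) ∧
      (∀ j : Fin n, y j ≠ 0 ↔ (j : ℕ) < k)}

lemma vecMul_block2_flip (hkn : k ≤ n) (p : FlipPair n k) (Q : Matrix (Fin n) (Fin n) ℝ)
    (w : Fin k → ℝ) (j : Fin (n - k)) :
    (w ᵥ* block2 hkn (flipQ k p Q)) j = (if p.2 j then 1 else -1) * (w ᵥ* block2 hkn Q) j := by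
  simp only [Matrix.vecMul, dotProduct, block2_flip hkn p Q, Finset.mul_sum]
  exact Finset.sum_congr rfl fun i _ => by ring

lemma mulVec_block3_flip (hkn : k ≤ n) (p : FlipPair n k) (Q : Matrix (Fin n) (Fin n) ℝ)
    (w : Fin k → ℝ) (i : Fin (n - k)) :
    (block3 hkn (flipQ k p Q) *ᵥ w) i = (if p.1 i then 1 else -1) * (block3 hkn Q *ᵥ w) i := by
  simp only [Matrix.mulVec, dotProduct, block3_flip hkn p Q, Finset.mul_sum]
  exact Finset.sum_congr rfl fun j _ => by ring

lemma count_E1 (hkn : k ≤ n) (Q : Matrix (Fin n) (Fin n) ℝ) (s : Finset (FlipPair n k))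
    (hs : ∀ p ∈ s, flipQ k p Q ∈ E1 hkn) : s.card ≤ 2 ^ (n - k) := by
  classical
  rcases s.eq_empty_or_nonempty with rfl | ⟨p₀, hp₀⟩
  · simp
  set B := block1 hkn Q with hB
  set ss : ℝ := (fun _ => (1 : ℝ)) ⬝ᵥ B⁻¹.mulVec fun _ => (1 : ℝ) with hss
  set v : ℝ := 1 / ss with hv
  set yy : Fin k → ℝ := v • B⁻¹.mulVec fun _ => (1 : ℝ) with hyy
  set xx : Fin k → ℝ := v • (Bᵀ)⁻¹.mulVec fun _ => (1 : ℝ) with hxx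
  have hmem : ∀ p ∈ s, ss ≠ 0 ∧
      (∀ j, (if p.2 j then 1 else -1) * (xx ᵥ* block2 hkn Q) j ≤ v) ∧
      (∀ i, v ≤ (if p.1 i then 1 else -1) * (block3 hkn Q *ᵥ yy) i) := by
    intro p hp
    have h := hs p hp
    rw [E1, Set.mem_setOf_eq, block1_flip hkn p Q] at h
    obtain ⟨h1, h2, h3, h4⟩ := h
    refine ⟨h2, fun j => ?_, fun i => ?_⟩
    · have := h3 j
      rwa [vecMul_block2_flip hkn p Q] at this
    · have := h4 i
      rwa [mulVec_block3_flip hkn p Q] at this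
  have hss0 : ss ≠ 0 := (hmem p₀ hp₀).1
  have hv0 : v ≠ 0 := one_div_ne_zero hss0
  have hcard : (Finset.univ : Finset (Fin (n - k) → Bool)).card = 2 ^ (n - k) := by
    rw [Finset.card_univ, Fintype.card_fun]
    simp
  rcases lt_or_gt_of_ne hv0 with hvneg | hvpos
  · -- v < 0 : the second (column-flip) component is pinned, so fst is injective-determining
    have hinj : Set.InjOn Prod.fst (s : Set (FlipPair n k)) := by
      intro p hp q hq hpq
      have h3p := ((hmem p hp).2.1)
      have h3q := ((hmem q hq).2.1)
      refine Prod.ext hpq ?_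
      funext j
      by_contra hne
      have hp3 := h3p j
      have hq3 := h3q j
      cases hb : p.2 j <;> cases hb' : q.2 j
      · exact hne (by rw [hb, hb'])
      · rw [hb] at hp3; rw [hb'] at hq3
        norm_num at hp3 hq3
        linarith
      · rw [hb] at hp3; rw [hb'] at hq3
        norm_num at hp3 hq3
        linarith
      · exact hne (by rw [hb, hb'])
    calc s.card ≤ (Finset.univ : Finset (Fin (n - k) → Bool)).card :=
          Finset.card_le_card_of_injOn Prod.fst (fun p _ => Finset.mem_univ _) hinj
      _ = 2 ^ (n - k) := hcard
  · -- v > 0 : the first (row-flip) component is pinned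
    have hinj : Set.InjOn Prod.snd (s : Set (FlipPair n k)) := by
      intro p hp q hq hpq
      have h4p := ((hmem p hp).2.2)
      have h4q := ((hmem q hq).2.2)
      refine Prod.ext ?_ hpq
      funext i
      by_contra hne
      have hp4 := h4p i
      have hq4 := h4q i
      cases hb : p.1 i <;> cases hb' : q.1 i
      · exact hne (by rw [hb, hb'])
      · rw [hb] at hp4; rw [hb'] at hq4
        norm_num at hp4 hq4
        linarith
      · rw [hb] at hp4; rw [hb'] at hq4
        norm_num at hp4 hq4
        linarith
      · exact hne (by rw [hb, hb'])
    calc s.card ≤ (Finset.univ : Finset (Fin (n - k) → Bool)).card :=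
          Finset.card_le_card_of_injOn Prod.snd (fun p _ => Finset.mem_univ _) hinj
      _ = 2 ^ (n - k) := hcard

end Events
section CountE2

variable {n k : ℕ}

lemma vecMul_flip_low (hkn : k ≤ n) (p : FlipPair n k) (Q : Matrix (Fin n) (Fin n) ℝ)
    (x : Fin n → ℝ) (hx : ∀ i : Fin n, ¬((i : ℕ) < k) → x i = 0) (j : Fin n) :
    (x ᵥ* flipQ k p Q) j = sgn k p.2 j * (x ᵥ* Q) j := by
  simp only [Matrix.vecMul, dotProduct, Finset.mul_sum]
  refine Finset.sum_congr rfl fun i _ => ?_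
  rw [flipQ_apply]
  by_cases h : (i : ℕ) < k
  · rw [sgn_low h]; ring
  · rw [hx i h]; ring

lemma mulVec_flip_low (hkn : k ≤ n) (p : FlipPair n k) (Q : Matrix (Fin n) (Fin n) ℝ)
    (y : Fin n → ℝ) (hy : ∀ j : Fin n, ¬((j : ℕ) < k) → y j = 0) (i : Fin n) :
    (flipQ k p Q *ᵥ y) i = sgn k p.1 i * (Q *ᵥ y) i := by
  simp only [Matrix.mulVec, dotProduct, Finset.mul_sum]
  refine Finset.sum_congr rfl fun j _ => ?_
  rw [flipQ_apply]
  by_cases h : (j : ℕ) < k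
  · rw [sgn_low h]; ring
  · rw [hy j h]; ring

lemma dot_le_of_forall_le {m : ℕ} {a y : Fin m → ℝ} {w : ℝ} (hy : y ∈ stdSimplex ℝ (Fin m))
    (h : ∀ j, a j ≤ w) : ∑ j, a j * y j ≤ w := by
  calc ∑ j, a j * y j ≤ ∑ j, w * y j :=
        Finset.sum_le_sum fun j _ => mul_le_mul_of_nonneg_right (h j) (hy.1 j)
    _ = w := by rw [← Finset.mul_sum, hy.2, mul_one]

lemma le_dot_of_forall_le {m : ℕ} {b x : Fin m → ℝ} {w : ℝ} (hx : x ∈ stdSimplex ℝ (Fin m))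
    (h : ∀ i, w ≤ b i) : w ≤ ∑ i, x i * b i := by
  calc w = ∑ i, x i * w := by rw [← Finset.sum_mul, hx.2, one_mul]
    _ ≤ ∑ i, x i * b i :=
        Finset.sum_le_sum fun i _ => mul_le_mul_of_nonneg_left (h i) (hx.1 i)

lemma count_E2 (hkn : k ≤ n) (Q : Matrix (Fin n) (Fin n) ℝ)
    (hu : IsUnit (block1 hkn Q).det) (s : Finset (FlipPair n k))
    (hs : ∀ p ∈ s, flipQ k p Q ∈ E2 n k) : s.card ≤ 2 ^ (n - k) := by
  classical
  rcases s.eq_empty_or_nonempty with rfl | ⟨p₀, hp₀⟩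
  · simp
  set B := block1 hkn Q with hB
  choose X hXs Y hYs hIneq1 hIneq2 hSupp1 hSupp2 using hs
  set w : ∀ p ∈ s, ℝ := fun p _ => gameValue (flipQ k p Q) with hw
  have hX0 : ∀ p hp (i : Fin n), ¬((i : ℕ) < k) → X p hp i = 0 := by
    intro p hp i hi
    by_contra h
    exact hi ((hSupp1 p hp i).mp h)
  have hY0 : ∀ p hp (j : Fin n), ¬((j : ℕ) < k) → Y p hp j = 0 := by
    intro p hp j hj
    by_contra h
    exact hj ((hSupp2 p hp j).mp h)
  -- cross inequalities
  have crossU : ∀ p hp q hq, X p hp ⬝ᵥ (Q *ᵥ Y q hq) ≤ w p hp := by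
    intro p hp q hq
    have h1 : ∑ j, (X p hp ᵥ* flipQ k p Q) j * Y q hq j ≤ w p hp :=
      dot_le_of_forall_le (hYs q hq) (hIneq1 p hp)
    calc X p hp ⬝ᵥ (Q *ᵥ Y q hq) = ∑ j, (X p hp ᵥ* Q) j * Y q hq j := by
          rw [Matrix.dotProduct_mulVec]
          rfl
      _ = ∑ j, (X p hp ᵥ* flipQ k p Q) j * Y q hq j := by
          refine Finset.sum_congr rfl fun j _ => ?_
          rw [vecMul_flip_low hkn p Q _ (hX0 p hp) j]
          by_cases h : (j : ℕ) < k
          · rw [sgn_low h]; ring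
          · rw [hY0 q hq j h]; ring
      _ ≤ w p hp := h1
  have crossL : ∀ p hp q hq, w q hq ≤ X p hp ⬝ᵥ (Q *ᵥ Y q hq) := by
    intro p hp q hq
    have h1 : w q hq ≤ ∑ i, X p hp i * (flipQ k q Q *ᵥ Y q hq) i :=
      le_dot_of_forall_le (hXs p hp) (hIneq2 q hq)
    calc w q hq ≤ ∑ i, X p hp i * (flipQ k q Q *ᵥ Y q hq) i := h1
      _ = X p hp ⬝ᵥ (Q *ᵥ Y q hq) := by
          refine Finset.sum_congr rfl fun i _ => ?_
          rw [mulVec_flip_low hkn q Q _ (hY0 q hq) i]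
          by_cases h : (i : ℕ) < k
          · rw [sgn_low h]; ring
          · rw [hX0 p hp i h]; ring
  have weq : ∀ p hp q hq, w p hp = w q hq := by
    intro p hp q hq
    exact le_antisymm ((crossL q hq p hp).trans (crossU q hq p hp))
      ((crossL p hp q hq).trans (crossU p hp q hq))
  set W : ℝ := w p₀ hp₀ with hW
  -- slackness for y
  have slackY : ∀ p hp (r : Fin k), (Q *ᵥ Y p hp) (lowIdx hkn r) = W := by
    intro p hp r
    have heq : X p hp ⬝ᵥ (Q *ᵥ Y p hp) = w p hp :=
      le_antisymm (crossU p hp p hp) (crossL p hp p hp)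
    have hzero : ∑ i, X p hp i * ((flipQ k p Q *ᵥ Y p hp) i - w p hp) = 0 := by
      have e1 : ∑ i, X p hp i * (flipQ k p Q *ᵥ Y p hp) i = X p hp ⬝ᵥ (Q *ᵥ Y p hp) := by
        refine Finset.sum_congr rfl fun i _ => ?_
        rw [mulVec_flip_low hkn p Q _ (hY0 p hp) i]
        by_cases h : (i : ℕ) < k
        · rw [sgn_low h]; ring
        · rw [hX0 p hp i h]; ring
      have e2 : ∑ i, X p hp i * w p hp = w p hp := by
        rw [← Finset.sum_mul, (hXs p hp).2, one_mul]
      calc ∑ i, X p hp i * ((flipQ k p Q *ᵥ Y p hp) i - w p hp)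
          = (∑ i, X p hp i * (flipQ k p Q *ᵥ Y p hp) i) - ∑ i, X p hp i * w p hp := by
            rw [← Finset.sum_sub_distrib]
            exact Finset.sum_congr rfl fun i _ => by ring
        _ = 0 := by rw [e1, e2, heq, sub_self]
    have hterms : ∀ i ∈ Finset.univ, 0 ≤ X p hp i * ((flipQ k p Q *ᵥ Y p hp) i - w p hp) := by
      intro i _
      exact mul_nonneg ((hXs p hp).1 i) (by linarith [hIneq2 p hp i])
    have hzero2 := (Finset.sum_eq_zero_iff_of_nonneg hterms).mp hzero
    have hXpos : X p hp (lowIdx hkn r) ≠ 0 := by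
      rw [hSupp1 p hp]
      exact r.isLt
    have h3 := hzero2 (lowIdx hkn r) (Finset.mem_univ _)
    have h4 : (flipQ k p Q *ᵥ Y p hp) (lowIdx hkn r) = w p hp := by
      rcases mul_eq_zero.mp h3 with h | h
      · exact absurd h hXpos
      · linarith
    have h5 : (flipQ k p Q *ᵥ Y p hp) (lowIdx hkn r) = (Q *ᵥ Y p hp) (lowIdx hkn r) := by
      rw [mulVec_flip_low hkn p Q _ (hY0 p hp), sgn_low (by exact r.isLt), one_mul]
    rw [← h5, h4, hw]
    exact (weq p hp p₀ hp₀)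
  -- slackness for x
  have slackX : ∀ p hp (r : Fin k), (X p hp ᵥ* Q) (lowIdx hkn r) = W := by
    intro p hp r
    have heq : X p hp ⬝ᵥ (Q *ᵥ Y p hp) = w p hp :=
      le_antisymm (crossU p hp p hp) (crossL p hp p hp)
    have hzero : ∑ j, (w p hp - (X p hp ᵥ* flipQ k p Q) j) * Y p hp j = 0 := by
      have e1 : ∑ j, (X p hp ᵥ* flipQ k p Q) j * Y p hp j = X p hp ⬝ᵥ (Q *ᵥ Y p hp) := by
        rw [Matrix.dotProduct_mulVec]
        refine Finset.sum_congr rfl fun j _ => ?_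
        rw [vecMul_flip_low hkn p Q _ (hX0 p hp) j]
        by_cases h : (j : ℕ) < k
        · rw [sgn_low h]; ring
        · rw [hY0 p hp j h]; ring
      have e2 : ∑ j, w p hp * Y p hp j = w p hp := by
        rw [← Finset.mul_sum, (hYs p hp).2, mul_one]
      calc ∑ j, (w p hp - (X p hp ᵥ* flipQ k p Q) j) * Y p hp j
          = (∑ j, w p hp * Y p hp j) - ∑ j, (X p hp ᵥ* flipQ k p Q) j * Y p hp j := by
            rw [← Finset.sum_sub_distrib]
            exact Finset.sum_congr rfl fun j _ => by ring
        _ = 0 := by rw [e1, e2, heq, sub_self]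
    have hterms : ∀ j ∈ Finset.univ, 0 ≤ (w p hp - (X p hp ᵥ* flipQ k p Q) j) * Y p hp j := by
      intro j _
      exact mul_nonneg (by linarith [hIneq1 p hp j]) ((hYs p hp).1 j)
    have hzero2 := (Finset.sum_eq_zero_iff_of_nonneg hterms).mp hzero
    have hYpos : Y p hp (lowIdx hkn r) ≠ 0 := by
      rw [hSupp2 p hp]
      exact r.isLt
    have h3 := hzero2 (lowIdx hkn r) (Finset.mem_univ _)
    have h4 : (X p hp ᵥ* flipQ k p Q) (lowIdx hkn r) = w p hp := by
      rcases mul_eq_zero.mp h3 with h | h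
      · linarith
      · exact absurd h hYpos
    have h5 : (X p hp ᵥ* flipQ k p Q) (lowIdx hkn r) = (X p hp ᵥ* Q) (lowIdx hkn r) := by
      rw [vecMul_flip_low hkn p Q _ (hX0 p hp), sgn_low (by exact r.isLt), one_mul]
    rw [← h5, h4, hw]
    exact (weq p hp p₀ hp₀)
  -- uniqueness of Y
  have uniqY : ∀ p hp, Y p hp = Y p₀ hp₀ := by
    intro p hp
    have key : ∀ p hp, (fun r : Fin k => Y p hp (lowIdx hkn r)) = B⁻¹ *ᵥ (fun _ => W) := by
      intro p hp
      have h1 : B *ᵥ (fun r : Fin k => Y p hp (lowIdx hkn r)) = (fun _ => W) := by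
        funext r
        have h2 : (B *ᵥ fun r : Fin k => Y p hp (lowIdx hkn r)) r = (Q *ᵥ Y p hp) (lowIdx hkn r) := by
          simp only [Matrix.mulVec, dotProduct, hB, block1, Matrix.submatrix_apply]
          exact (sum_low hkn (fun j => Q (lowIdx hkn r) j * Y p hp j)
            (fun j hj => by simp only [hY0 p hp j hj, mul_zero])).symm
        rw [h2, slackY p hp r]
      have h3 := congrArg (fun z => B⁻¹ *ᵥ z) h1
      simpa [Matrix.mulVec_mulVec, Matrix.nonsing_inv_mul B hu, Matrix.one_mulVec] using h3
    funext j
    by_cases h : (j : ℕ) < k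
    · have := congrFun (key p hp) ⟨(j : ℕ), h⟩
      have h2 := congrFun (key p₀ hp₀) ⟨(j : ℕ), h⟩
      have hj : lowIdx hkn ⟨(j : ℕ), h⟩ = j := Fin.ext rfl
      rw [hj] at this h2
      rw [this, h2]
    · rw [hY0 p hp j h, hY0 p₀ hp₀ j h]
  have uniqX : ∀ p hp, X p hp = X p₀ hp₀ := by
    intro p hp
    have key : ∀ p hp, (fun r : Fin k => X p hp (lowIdx hkn r)) = (fun _ => W) ᵥ* B⁻¹ := by
      intro p hp
      have h1 : (fun r : Fin k => X p hp (lowIdx hkn r)) ᵥ* B = (fun _ => W) := by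
        funext r
        have h2 : ((fun r : Fin k => X p hp (lowIdx hkn r)) ᵥ* B) r = (X p hp ᵥ* Q) (lowIdx hkn r) := by
          simp only [Matrix.vecMul, dotProduct, hB, block1, Matrix.submatrix_apply]
          exact (sum_low hkn (fun i => X p hp i * Q i (lowIdx hkn r))
            (fun i hi => by simp only [hX0 p hp i hi, zero_mul])).symm
        rw [h2, slackX p hp r]
      have h3 := congrArg (fun z => z ᵥ* B⁻¹) h1
      simpa [Matrix.vecMul_vecMul, Matrix.mul_nonsing_inv B hu, Matrix.vecMul_one] using h3
    funext j
    by_cases h : (j : ℕ) < k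
    · have := congrFun (key p hp) ⟨(j : ℕ), h⟩
      have h2 := congrFun (key p₀ hp₀) ⟨(j : ℕ), h⟩
      have hj : lowIdx hkn ⟨(j : ℕ), h⟩ = j := Fin.ext rfl
      rw [hj] at this h2
      rw [this, h2]
    · rw [hX0 p hp j h, hX0 p₀ hp₀ j h]
  -- W ≠ 0
  have hW0 : W ≠ 0 := by
    intro h0
    have h1 : ∀ r : Fin k, (fun r : Fin k => Y p₀ hp₀ (lowIdx hkn r)) r = 0 := by
      have key : (fun r : Fin k => Y p₀ hp₀ (lowIdx hkn r)) = B⁻¹ *ᵥ (fun _ => W) := by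
        have h1 : B *ᵥ (fun r : Fin k => Y p₀ hp₀ (lowIdx hkn r)) = (fun _ => W) := by
          funext r
          have h2 : (B *ᵥ fun r : Fin k => Y p₀ hp₀ (lowIdx hkn r)) r
              = (Q *ᵥ Y p₀ hp₀) (lowIdx hkn r) := by
            simp only [Matrix.mulVec, dotProduct, hB, block1, Matrix.submatrix_apply]
            exact (sum_low hkn (fun j => Q (lowIdx hkn r) j * Y p₀ hp₀ j)
              (fun j hj => by simp only [hY0 p₀ hp₀ j hj, mul_zero])).symm
          rw [h2, slackY p₀ hp₀ r]
        have h3 := congrArg (fun z => B⁻¹ *ᵥ z) h1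
        simpa [Matrix.mulVec_mulVec, Matrix.nonsing_inv_mul B hu, Matrix.one_mulVec] using h3
      intro r
      rw [key]
      simp [h0, Matrix.mulVec]
    have h2 : ∑ j, Y p₀ hp₀ j = 0 := by
      rw [sum_low hkn _ (hY0 p₀ hp₀)]
      exact Finset.sum_eq_zero fun r _ => h1 r
    rw [(hYs p₀ hp₀).2] at h2
    norm_num at h2
  -- pinning
  have hcard : (Finset.univ : Finset (Fin (n - k) → Bool)).card = 2 ^ (n - k) := by
    rw [Finset.card_univ, Fintype.card_fun]
    simp
  rcases lt_or_gt_of_ne hW0 with hWneg | hWpos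
  · -- W < 0 : column flips pinned via x-side
    have hinj : Set.InjOn Prod.fst (s : Set (FlipPair n k)) := by
      intro p hp q hq hpq
      refine Prod.ext hpq ?_
      funext j0
      by_contra hne
      set j : Fin n := highIdx hkn j0 with hj
      have hple : (X p hp ᵥ* flipQ k p Q) j ≤ w p hp := hIneq1 p hp j
      have hqle : (X q hq ᵥ* flipQ k q Q) j ≤ w q hq := hIneq1 q hq j
      have hpw : w p hp = W := weq p hp p₀ hp₀
      have hqw : w q hq = W := weq q hq p₀ hp₀
      rw [vecMul_flip_low hkn p Q _ (hX0 p hp), sgn_high hkn, uniqX p hp, hpw] at hple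
      rw [vecMul_flip_low hkn q Q _ (hX0 q hq), sgn_high hkn, uniqX q hq, hqw] at hqle
      cases hb : p.2 j0 <;> cases hb' : q.2 j0
      · exact hne (by rw [hb, hb'])
      · rw [hb] at hple; rw [hb'] at hqle
        norm_num at hple hqle
        linarith
      · rw [hb] at hple; rw [hb'] at hqle
        norm_num at hple hqle
        linarith
      · exact hne (by rw [hb, hb'])
    calc s.card ≤ (Finset.univ : Finset (Fin (n - k) → Bool)).card :=
          Finset.card_le_card_of_injOn Prod.fst (fun p _ => Finset.mem_univ _) hinj
      _ = 2 ^ (n - k) := hcard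
  · -- W > 0 : row flips pinned via y-side
    have hinj : Set.InjOn Prod.snd (s : Set (FlipPair n k)) := by
      intro p hp q hq hpq
      refine Prod.ext ?_ hpq
      funext i0
      by_contra hne
      set i : Fin n := highIdx hkn i0 with hi
      have hple : w p hp ≤ (flipQ k p Q *ᵥ Y p hp) i := hIneq2 p hp i
      have hqle : w q hq ≤ (flipQ k q Q *ᵥ Y q hq) i := hIneq2 q hq i
      have hpw : w p hp = W := weq p hp p₀ hp₀
      have hqw : w q hq = W := weq q hq p₀ hp₀
      rw [mulVec_flip_low hkn p Q _ (hY0 p hp), sgn_high hkn, uniqY p hp, hpw] at hple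
      rw [mulVec_flip_low hkn q Q _ (hY0 q hq), sgn_high hkn, uniqY q hq, hqw] at hqle
      cases hb : p.1 i0 <;> cases hb' : q.1 i0
      · exact hne (by rw [hb, hb'])
      · rw [hb] at hple; rw [hb'] at hqle
        norm_num at hple hqle
        linarith
      · rw [hb] at hple; rw [hb'] at hqle
        norm_num at hple hqle
        linarith
      · exact hne (by rw [hb, hb'])
    calc s.card ≤ (Finset.univ : Finset (Fin (n - k) → Bool)).card :=
          Finset.card_le_card_of_injOn Prod.snd (fun p _ => Finset.mem_univ _) hinj
      _ = 2 ^ (n - k) := hcard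

end CountE2
section GV

lemma stdSimplex_nonempty {m : ℕ} (hm : 0 < m) : (stdSimplex ℝ (Fin m)).Nonempty := by
  refine ⟨fun _ => (m : ℝ)⁻¹, fun i => by positivity, ?_⟩
  rw [Finset.sum_const, Finset.card_univ, Fintype.card_fin, nsmul_eq_mul]
  field_simp

lemma mem_stdSimplex_le_one {m : ℕ} {x : Fin m → ℝ} (hx : x ∈ stdSimplex ℝ (Fin m)) (i : Fin m) :
    x i ≤ 1 := by
  have := Finset.single_le_sum (f := x) (fun j _ => hx.1 j) (Finset.mem_univ i)
  rwa [hx.2] at this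

lemma abs_dot_le {n m : ℕ} {x : Fin n → ℝ} {y : Fin m → ℝ} (M : Matrix (Fin n) (Fin m) ℝ)
    (hx : x ∈ stdSimplex ℝ (Fin n)) (hy : y ∈ stdSimplex ℝ (Fin m)) :
    |x ⬝ᵥ M *ᵥ y| ≤ ∑ i, ∑ j, |M i j| := by
  calc |x ⬝ᵥ M *ᵥ y| ≤ ∑ i, |x i * (M *ᵥ y) i| := Finset.abs_sum_le_sum_abs _ _
    _ ≤ ∑ i, ∑ j, |M i j| := by
        refine Finset.sum_le_sum fun i _ => ?_
        rw [abs_mul]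
        calc |x i| * |(M *ᵥ y) i| ≤ 1 * |(M *ᵥ y) i| := by
              refine mul_le_mul_of_nonneg_right ?_ (abs_nonneg _)
              rw [abs_of_nonneg (hx.1 i)]
              exact mem_stdSimplex_le_one hx i
          _ = |(M *ᵥ y) i| := one_mul _
          _ ≤ ∑ j, |M i j * y j| := by
              rw [show (M *ᵥ y) i = ∑ j, M i j * y j from rfl]
              exact Finset.abs_sum_le_sum_abs _ _
          _ ≤ ∑ j, |M i j| := by
              refine Finset.sum_le_sum fun j _ => ?_
              rw [abs_mul]
              calc |M i j| * |y j| ≤ |M i j| * 1 := by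
                    refine mul_le_mul_of_nonneg_left ?_ (abs_nonneg _)
                    rw [abs_of_nonneg (hy.1 j)]
                    exact mem_stdSimplex_le_one hy j
                _ = |M i j| := mul_one _

lemma gameValue_diff_le {n m : ℕ} (hn : 0 < n) (hm : 0 < m)
    (M M' : Matrix (Fin n) (Fin m) ℝ) :
    gameValue M ≤ gameValue M' + ∑ i, ∑ j, |M i j - M' i j| := by
  haveI hne : Nonempty ↥(stdSimplex ℝ (Fin n)) := (stdSimplex_nonempty hn).to_subtype
  haveI hme : Nonempty ↥(stdSimplex ℝ (Fin m)) := (stdSimplex_nonempty hm).to_subtype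
  set c : ℝ := ∑ i, ∑ j, |M i j - M' i j| with hc
  have hbddA : ∀ (N : Matrix (Fin n) (Fin m) ℝ) (x : ↥(stdSimplex ℝ (Fin n))),
      BddAbove (Set.range fun y : ↥(stdSimplex ℝ (Fin m)) =>
        (x : Fin n → ℝ) ⬝ᵥ N *ᵥ (y : Fin m → ℝ)) := by
    intro N x
    refine ⟨∑ i, ∑ j, |N i j|, ?_⟩
    rintro r ⟨y, rfl⟩
    exact (le_abs_self _).trans (abs_dot_le N x.2 y.2)
  have hbddB : ∀ (N : Matrix (Fin n) (Fin m) ℝ), BddBelow (Set.range fun x : ↥(stdSimplex ℝ (Fin n)) =>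
      ⨆ y : ↥(stdSimplex ℝ (Fin m)), (x : Fin n → ℝ) ⬝ᵥ N *ᵥ (y : Fin m → ℝ)) := by
    intro N
    refine ⟨-(∑ i, ∑ j, |N i j|), ?_⟩
    rintro r ⟨x, rfl⟩
    obtain ⟨y⟩ := hme
    refine le_trans ?_ (le_ciSup (hbddA N x) y)
    have := abs_dot_le N x.2 y.2
    rw [abs_le] at this
    exact this.1
  have key : ∀ x : ↥(stdSimplex ℝ (Fin n)),
      (⨆ y : ↥(stdSimplex ℝ (Fin m)), (x : Fin n → ℝ) ⬝ᵥ M *ᵥ (y : Fin m → ℝ))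
      ≤ (⨆ y : ↥(stdSimplex ℝ (Fin m)), (x : Fin n → ℝ) ⬝ᵥ M' *ᵥ (y : Fin m → ℝ)) + c := by
    intro x
    refine ciSup_le fun y => ?_
    have h1 : (x : Fin n → ℝ) ⬝ᵥ M *ᵥ (y : Fin m → ℝ)
        = (x : Fin n → ℝ) ⬝ᵥ M' *ᵥ (y : Fin m → ℝ)
          + (x : Fin n → ℝ) ⬝ᵥ (M - M') *ᵥ (y : Fin m → ℝ) := by
      rw [Matrix.sub_mulVec, dotProduct_sub]
      ring
    rw [h1]
    have h2 : (x : Fin n → ℝ) ⬝ᵥ (M - M') *ᵥ (y : Fin m → ℝ) ≤ c := by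
      refine (le_abs_self _).trans ?_
      rw [hc]
      exact abs_dot_le _ x.2 y.2
    have h3 : (x : Fin n → ℝ) ⬝ᵥ M' *ᵥ (y : Fin m → ℝ)
        ≤ ⨆ y : ↥(stdSimplex ℝ (Fin m)), (x : Fin n → ℝ) ⬝ᵥ M' *ᵥ (y : Fin m → ℝ) :=
      le_ciSup (hbddA M' x) y
    linarith
  rw [gameValue, gameValue]
  have h4 : ∀ x : ↥(stdSimplex ℝ (Fin n)),
      (⨅ x : ↥(stdSimplex ℝ (Fin n)), ⨆ y : ↥(stdSimplex ℝ (Fin m)),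
        (x : Fin n → ℝ) ⬝ᵥ M *ᵥ (y : Fin m → ℝ)) - c
      ≤ ⨆ y : ↥(stdSimplex ℝ (Fin m)), (x : Fin n → ℝ) ⬝ᵥ M' *ᵥ (y : Fin m → ℝ) := by
    intro x
    have h5 := ciInf_le (hbddB M) x
    have h6 := key x
    linarith
  have h7 := le_ciInf h4
  linarith

lemma gameValue_continuous {n m : ℕ} (hn : 0 < n) (hm : 0 < m) :
    Continuous (gameValue (n := n) (m := m)) := by
  have hK : ∀ M M' : Fin n → Fin m → ℝ,
      dist (gameValue (Matrix.of M)) (gameValue (Matrix.of M')) ≤ (n * m : ℝ) * dist M M' := by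
    intro M M'
    have hsum : ∀ N N' : Fin n → Fin m → ℝ,
        (∑ i, ∑ j, |N i j - N' i j|) ≤ (n * m : ℝ) * dist N N' := by
      intro N N'
      calc (∑ i, ∑ j, |N i j - N' i j|) ≤ ∑ _i : Fin n, ∑ _j : Fin m, dist N N' := by
            refine Finset.sum_le_sum fun i _ => Finset.sum_le_sum fun j _ => ?_
            rw [← Real.dist_eq]
            exact (dist_le_pi_dist (N i) (N' i) j).trans (dist_le_pi_dist N N' i)
        _ = (n * m : ℝ) * dist N N' := by
            simp [Finset.sum_const, Finset.card_univ, nsmul_eq_mul]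
            ring
    have h1 := gameValue_diff_le hn hm (Matrix.of M) (Matrix.of M')
    have h2 := gameValue_diff_le hn hm (Matrix.of M') (Matrix.of M)
    have h3 : (∑ i, ∑ j, |Matrix.of M' i j - Matrix.of M i j|)
        = ∑ i, ∑ j, |Matrix.of M i j - Matrix.of M' i j| := by
      refine Finset.sum_congr rfl fun i _ => Finset.sum_congr rfl fun j _ => ?_
      rw [abs_sub_comm]
    rw [h3] at h2
    rw [Real.dist_eq, abs_le]
    have h4 : (∑ i, ∑ j, |Matrix.of M i j - Matrix.of M' i j|) ≤ (n * m : ℝ) * dist M M' :=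
      hsum M M'
    constructor
    · linarith
    · linarith
  have hlip : LipschitzWith (⟨(n * m : ℝ), by positivity⟩ : ℝ≥0)
      (fun M : Fin n → Fin m → ℝ => gameValue (Matrix.of M)) :=
    LipschitzWith.of_dist_le_mul fun M M' => hK M M'
  exact hlip.continuous

end GV
section Meas

variable {n k : ℕ}

lemma measurable_entry {α : Type*} [MeasurableSpace α] {a b : ℕ}
    {f : α → Matrix (Fin a) (Fin b) ℝ} (hf : Measurable f) (i : Fin a) (j : Fin b) :
    Measurable fun x => f x i j :=
  (measurable_pi_apply j).comp ((measurable_pi_apply i).comp hf)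

lemma measurable_block1 (hkn : k ≤ n) :
    Measurable fun Q : Matrix (Fin n) (Fin n) ℝ => block1 hkn Q :=
  (continuous_id.matrix_submatrix (lowIdx hkn) (lowIdx hkn)).measurable

lemma measurable_det_block1 (hkn : k ≤ n) :
    Measurable fun Q : Matrix (Fin n) (Fin n) ℝ => (block1 hkn Q).det :=
  ((continuous_id.matrix_submatrix (lowIdx hkn) (lowIdx hkn)).matrix_det).measurable

lemma measurable_matrix_inv {α : Type*} [MeasurableSpace α] {a : ℕ}
    {f : α → Matrix (Fin a) (Fin a) ℝ} (hf : Measurable f) :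
    Measurable fun x => (f x)⁻¹ := by
  have hform : ∀ x, (f x)⁻¹ = ((f x).det)⁻¹ • (f x).adjugate := by
    intro x
    rw [Matrix.inv_def, Ring.inverse_eq_inv']
  simp only [hform]
  refine measurable_pi_lambda _ fun i => measurable_pi_lambda _ fun j => ?_
  have h1 : Measurable fun x => ((f x).det)⁻¹ := by
    have : Continuous fun A : Matrix (Fin a) (Fin a) ℝ => A.det :=
      continuous_id.matrix_det
    exact (this.measurable.comp hf).inv
  have h2 : Measurable fun x => (f x).adjugate i j := by
    have : Continuous fun A : Matrix (Fin a) (Fin a) ℝ => A.adjugate :=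
      continuous_id.matrix_adjugate
    exact measurable_entry (this.measurable.comp hf) i j
  exact h1.mul h2

lemma measurable_ssQ (hkn : k ≤ n) :
    Measurable fun Q : Matrix (Fin n) (Fin n) ℝ =>
      ((fun _ => (1 : ℝ)) ⬝ᵥ (block1 hkn Q)⁻¹.mulVec fun _ => (1 : ℝ)) := by
  have hinv := measurable_matrix_inv (measurable_block1 hkn)
  show Measurable fun Q => ∑ r, (1 : ℝ) * ∑ c, (block1 hkn Q)⁻¹ r c * 1
  refine Finset.measurable_sum _ fun r _ => ?_
  refine (measurable_const.mul ?_)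
  refine Finset.measurable_sum _ fun c _ => ?_
  exact (measurable_entry hinv r c).mul measurable_const

lemma E1_measurable (hkn : k ≤ n) : MeasurableSet (E1 hkn) := by
  have hinv := measurable_matrix_inv (measurable_block1 hkn)
  have hinvT : Measurable fun Q : Matrix (Fin n) (Fin n) ℝ => ((block1 hkn Q)ᵀ)⁻¹ :=
    measurable_matrix_inv ((continuous_id.matrix_submatrix (lowIdx hkn)
      (lowIdx hkn)).matrix_transpose).measurable
  have hss := measurable_ssQ hkn
  have hv : Measurable fun Q : Matrix (Fin n) (Fin n) ℝ =>
      1 / ((fun _ => (1 : ℝ)) ⬝ᵥ (block1 hkn Q)⁻¹.mulVec fun _ => (1 : ℝ)) :=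
    measurable_const.div hss
  have hblock2 : Measurable fun Q : Matrix (Fin n) (Fin n) ℝ => block2 hkn Q :=
    (continuous_id.matrix_submatrix (lowIdx hkn) (highIdx hkn)).measurable
  have hblock3 : Measurable fun Q : Matrix (Fin n) (Fin n) ℝ => block3 hkn Q :=
    (continuous_id.matrix_submatrix (highIdx hkn) (lowIdx hkn)).measurable
  have hLHS : ∀ j : Fin (n - k), Measurable fun Q : Matrix (Fin n) (Fin n) ℝ =>
      (((1 / ((fun _ => (1 : ℝ)) ⬝ᵥ (block1 hkn Q)⁻¹.mulVec fun _ => (1 : ℝ))) •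
        ((block1 hkn Q)ᵀ)⁻¹.mulVec fun _ => (1 : ℝ)) ᵥ* block2 hkn Q) j := by
    intro j
    show Measurable fun Q => ∑ i : Fin k,
      ((1 / ((fun _ => (1 : ℝ)) ⬝ᵥ (block1 hkn Q)⁻¹.mulVec fun _ => (1 : ℝ)))
        * ∑ c, ((block1 hkn Q)ᵀ)⁻¹ i c * 1) * block2 hkn Q i j
    refine Finset.measurable_sum _ fun i _ => ?_
    refine Measurable.mul (Measurable.mul hv ?_) (measurable_entry hblock2 i j)
    exact Finset.measurable_sum _ fun c _ => (measurable_entry hinvT i c).mul measurable_const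
  have hRHS : ∀ i : Fin (n - k), Measurable fun Q : Matrix (Fin n) (Fin n) ℝ =>
      ((block3 hkn Q).mulVec
        ((1 / ((fun _ => (1 : ℝ)) ⬝ᵥ (block1 hkn Q)⁻¹.mulVec fun _ => (1 : ℝ))) •
          (block1 hkn Q)⁻¹.mulVec fun _ => (1 : ℝ))) i := by
    intro i
    show Measurable fun Q => ∑ c : Fin k, block3 hkn Q i c *
      ((1 / ((fun _ => (1 : ℝ)) ⬝ᵥ (block1 hkn Q)⁻¹.mulVec fun _ => (1 : ℝ)))
        * ∑ r, (block1 hkn Q)⁻¹ c r * 1)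
    refine Finset.measurable_sum _ fun c _ => ?_
    refine Measurable.mul (measurable_entry hblock3 i c) (Measurable.mul hv ?_)
    exact Finset.measurable_sum _ fun r _ => (measurable_entry hinv c r).mul measurable_const
  have hset : E1 hkn = ({Q | (block1 hkn Q).det ≠ 0} ∩
      ({Q | ((fun _ => (1 : ℝ)) ⬝ᵥ (block1 hkn Q)⁻¹.mulVec fun _ => (1 : ℝ)) ≠ 0} ∩
      ((⋂ j : Fin (n - k), {Q | (((1 / ((fun _ => (1 : ℝ)) ⬝ᵥ (block1 hkn Q)⁻¹.mulVec fun _ => (1 : ℝ))) •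
            ((block1 hkn Q)ᵀ)⁻¹.mulVec fun _ => (1 : ℝ)) ᵥ* block2 hkn Q) j ≤
          1 / ((fun _ => (1 : ℝ)) ⬝ᵥ (block1 hkn Q)⁻¹.mulVec fun _ => (1 : ℝ))}) ∩
      (⋂ i : Fin (n - k), {Q | 1 / ((fun _ => (1 : ℝ)) ⬝ᵥ (block1 hkn Q)⁻¹.mulVec fun _ => (1 : ℝ)) ≤
          ((block3 hkn Q).mulVec
            ((1 / ((fun _ => (1 : ℝ)) ⬝ᵥ (block1 hkn Q)⁻¹.mulVec fun _ => (1 : ℝ))) •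
              (block1 hkn Q)⁻¹.mulVec fun _ => (1 : ℝ))) i})))) := by
    ext Q
    simp only [E1, Set.mem_setOf_eq, Set.mem_inter_iff, Set.mem_iInter, isUnit_iff_ne_zero]
    try tauto
  rw [hset]
  refine MeasurableSet.inter ?_ (MeasurableSet.inter ?_ (MeasurableSet.inter ?_ ?_))
  · exact (measurable_det_block1 hkn (measurableSet_singleton 0)).compl
  · exact (measurable_ssQ hkn (measurableSet_singleton 0)).compl
  · exact MeasurableSet.iInter fun j => measurableSet_le (hLHS j) hv
  · exact MeasurableSet.iInter fun i => measurableSet_le hv (hRHS i)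

/-- the compact witness region -/
def Kq (n k : ℕ) (q : ℚ) : Set ((Fin n → ℝ) × (Fin n → ℝ)) :=
  {z | z.1 ∈ stdSimplex ℝ (Fin n) ∧ z.2 ∈ stdSimplex ℝ (Fin n) ∧
    (∀ i : Fin n, ((i : ℕ) < k → (q : ℝ) ≤ z.1 i ∧ (q : ℝ) ≤ z.2 i) ∧
      (¬(i : ℕ) < k → z.1 i = 0 ∧ z.2 i = 0))}

lemma Kq_isCompact (q : ℚ) : IsCompact (Kq n k q) := by
  have hclosed : IsClosed (Kq n k q) := by
    have h1 : Kq n k q = (Prod.fst ⁻¹' stdSimplex ℝ (Fin n)) ∩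
        ((Prod.snd ⁻¹' stdSimplex ℝ (Fin n)) ∩
        (⋂ i : Fin n, {z : (Fin n → ℝ) × (Fin n → ℝ) |
          ((i : ℕ) < k → (q : ℝ) ≤ z.1 i ∧ (q : ℝ) ≤ z.2 i) ∧
          (¬(i : ℕ) < k → z.1 i = 0 ∧ z.2 i = 0)})) := by
      ext z
      simp only [Kq, Set.mem_setOf_eq, Set.mem_inter_iff, Set.mem_preimage, Set.mem_iInter]
      try tauto
    rw [h1]
    have hsimp : IsClosed (stdSimplex ℝ (Fin n)) := (isCompact_stdSimplex (𝕜 := ℝ) (ι := Fin n)).isClosed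
    refine (hsimp.preimage continuous_fst).inter ((hsimp.preimage continuous_snd).inter ?_)
    refine isClosed_iInter fun i => ?_
    by_cases h : (i : ℕ) < k
    · have : {z : (Fin n → ℝ) × (Fin n → ℝ) |
          ((i : ℕ) < k → (q : ℝ) ≤ z.1 i ∧ (q : ℝ) ≤ z.2 i) ∧
          (¬(i : ℕ) < k → z.1 i = 0 ∧ z.2 i = 0)} =
          {z | (q : ℝ) ≤ z.1 i} ∩ {z | (q : ℝ) ≤ z.2 i} := by
        ext z; simp only [Set.mem_setOf_eq, Set.mem_inter_iff]; tauto
      rw [this]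
      exact (isClosed_le continuous_const ((continuous_apply i).comp continuous_fst)).inter
        (isClosed_le continuous_const ((continuous_apply i).comp continuous_snd))
    · have : {z : (Fin n → ℝ) × (Fin n → ℝ) |
          ((i : ℕ) < k → (q : ℝ) ≤ z.1 i ∧ (q : ℝ) ≤ z.2 i) ∧
          (¬(i : ℕ) < k → z.1 i = 0 ∧ z.2 i = 0)} =
          {z | z.1 i = 0} ∩ {z | z.2 i = 0} := by
        ext z; simp only [Set.mem_setOf_eq, Set.mem_inter_iff]; tauto
      rw [this]
      exact (isClosed_eq ((continuous_apply i).comp continuous_fst) continuous_const).inter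
        (isClosed_eq ((continuous_apply i).comp continuous_snd) continuous_const)
  refine IsCompact.of_isClosed_subset (IsCompact.prod (isCompact_stdSimplex (𝕜 := ℝ) (ι := Fin n)) (isCompact_stdSimplex (𝕜 := ℝ) (ι := Fin n)))
    hclosed ?_
  intro z hz
  exact ⟨hz.1, hz.2.1⟩

lemma E2_measurable (hn : 0 < n) (hk1 : 1 ≤ k) (hkn : k ≤ n) :
    MeasurableSet (E2 n k) := by
  classical
  have hgv : Continuous (gameValue (n := n) (m := n)) := gameValue_continuous hn hn
  have hA : ∀ q : ℚ, IsClosed {Q : Matrix (Fin n) (Fin n) ℝ |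
      ∃ z ∈ Kq n k q, (∀ j, (z.1 ᵥ* Q) j ≤ gameValue Q) ∧
        (∀ i, gameValue Q ≤ (Q *ᵥ z.2) i)} := by
    intro q
    haveI : CompactSpace ↥(Kq n k q) := isCompact_iff_compactSpace.mp (Kq_isCompact q)
    set W : Set (↥(Kq n k q) × Matrix (Fin n) (Fin n) ℝ) :=
      {zQ | (∀ j, ((zQ.1 : (Fin n → ℝ) × (Fin n → ℝ)).1 ᵥ* zQ.2) j ≤ gameValue zQ.2) ∧
        (∀ i, gameValue zQ.2 ≤ (zQ.2 *ᵥ (zQ.1 : (Fin n → ℝ) × (Fin n → ℝ)).2) i)} with hW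
    have hWclosed : IsClosed W := by
      have hx : Continuous fun zQ : ↥(Kq n k q) × Matrix (Fin n) (Fin n) ℝ =>
          (zQ.1 : (Fin n → ℝ) × (Fin n → ℝ)).1 :=
        continuous_fst.comp (continuous_subtype_val.comp continuous_fst)
      have hy : Continuous fun zQ : ↥(Kq n k q) × Matrix (Fin n) (Fin n) ℝ =>
          (zQ.1 : (Fin n → ℝ) × (Fin n → ℝ)).2 :=
        continuous_snd.comp (continuous_subtype_val.comp continuous_fst)
      have hQ : Continuous fun zQ : ↥(Kq n k q) × Matrix (Fin n) (Fin n) ℝ => zQ.2 :=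
        continuous_snd
      have h1 : IsClosed {zQ : ↥(Kq n k q) × Matrix (Fin n) (Fin n) ℝ |
          ∀ j, ((zQ.1 : (Fin n → ℝ) × (Fin n → ℝ)).1 ᵥ* zQ.2) j ≤ gameValue zQ.2} := by
        have : {zQ : ↥(Kq n k q) × Matrix (Fin n) (Fin n) ℝ |
            ∀ j, ((zQ.1 : (Fin n → ℝ) × (Fin n → ℝ)).1 ᵥ* zQ.2) j ≤ gameValue zQ.2}
            = ⋂ j, {zQ : ↥(Kq n k q) × Matrix (Fin n) (Fin n) ℝ |
              ((zQ.1 : (Fin n → ℝ) × (Fin n → ℝ)).1 ᵥ* zQ.2) j ≤ gameValue zQ.2} := by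
          ext; simp
        rw [this]
        refine isClosed_iInter fun j => isClosed_le ?_ (hgv.comp hQ)
        exact (continuous_apply j).comp (hx.matrix_vecMul hQ)
      have h2 : IsClosed {zQ : ↥(Kq n k q) × Matrix (Fin n) (Fin n) ℝ |
          ∀ i, gameValue zQ.2 ≤ (zQ.2 *ᵥ (zQ.1 : (Fin n → ℝ) × (Fin n → ℝ)).2) i} := by
        have : {zQ : ↥(Kq n k q) × Matrix (Fin n) (Fin n) ℝ |
            ∀ i, gameValue zQ.2 ≤ (zQ.2 *ᵥ (zQ.1 : (Fin n → ℝ) × (Fin n → ℝ)).2) i}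
            = ⋂ i, {zQ : ↥(Kq n k q) × Matrix (Fin n) (Fin n) ℝ |
              gameValue zQ.2 ≤ (zQ.2 *ᵥ (zQ.1 : (Fin n → ℝ) × (Fin n → ℝ)).2) i} := by
          ext; simp
        rw [this]
        refine isClosed_iInter fun i => isClosed_le (hgv.comp hQ) ?_
        exact (continuous_apply i).comp (hQ.matrix_mulVec hy)
      exact h1.inter h2
    have himg : {Q : Matrix (Fin n) (Fin n) ℝ |
        ∃ z ∈ Kq n k q, (∀ j, (z.1 ᵥ* Q) j ≤ gameValue Q) ∧
          (∀ i, gameValue Q ≤ (Q *ᵥ z.2) i)} = Prod.snd '' W := by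
      ext Q
      constructor
      · rintro ⟨z, hz, h1, h2⟩
        exact ⟨(⟨z, hz⟩, Q), ⟨h1, h2⟩, rfl⟩
      · rintro ⟨⟨z, Q'⟩, ⟨h1, h2⟩, rfl⟩
        exact ⟨(z : (Fin n → ℝ) × (Fin n → ℝ)), z.2, h1, h2⟩
    rw [himg]
    exact isClosedMap_snd_of_compactSpace W hWclosed
  have hunion : E2 n k = ⋃ q : {q : ℚ // 0 < q},
      {Q : Matrix (Fin n) (Fin n) ℝ |
        ∃ z ∈ Kq n k (q : ℚ), (∀ j, (z.1 ᵥ* Q) j ≤ gameValue Q) ∧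
          (∀ i, gameValue Q ≤ (Q *ᵥ z.2) i)} := by
    ext Q
    simp only [E2, Set.mem_setOf_eq, Set.mem_iUnion]
    constructor
    · rintro ⟨x, hx, y, hy, h1, h2, h3, h4⟩
      -- find a positive rational below all low coordinates
      have hlow : ∀ i : Fin n, (i : ℕ) < k → 0 < x i ∧ 0 < y i := by
        intro i hi
        exact ⟨lt_of_le_of_ne (hx.1 i) (Ne.symm ((h3 i).mpr hi)),
          lt_of_le_of_ne (hy.1 i) (Ne.symm ((h4 i).mpr hi))⟩
      set mval : ℝ := (Finset.univ : Finset (Fin n)).inf' (by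
        refine Finset.univ_nonempty_iff.mpr ?_
        exact Fin.pos_iff_nonempty.mp hn)
        (fun i => if (i : ℕ) < k then min (x i) (y i) else 1) with hmval
      have hmpos : 0 < mval := by
        rw [hmval]
        rw [Finset.lt_inf'_iff]
        intro i _
        by_cases h : (i : ℕ) < k
        · rw [if_pos h]
          exact lt_min (hlow i h).1 (hlow i h).2
        · rw [if_neg h]
          norm_num
      obtain ⟨q, hq0, hqm⟩ := exists_rat_btwn hmpos
      refine ⟨⟨q, by exact_mod_cast hq0⟩, (x, y), ⟨hx, hy, fun i => ⟨fun hi => ?_, fun hi => ?_⟩⟩,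
        h1, h2⟩
      · have hinf : mval ≤ min (x i) (y i) := by
          have := Finset.inf'_le (f := fun i : Fin n => if (i : ℕ) < k then min (x i) (y i) else 1)
            (Finset.mem_univ i)
          rwa [if_pos hi] at this
        constructor
        · exact le_trans hqm.le (hinf.trans (min_le_left _ _))
        · exact le_trans hqm.le (hinf.trans (min_le_right _ _))
      · exact ⟨by_contra fun h => hi ((h3 i).mp h) |>.elim, by_contra fun h => hi ((h4 i).mp h) |>.elim⟩
    · rintro ⟨⟨q, hq⟩, z, ⟨hz1, hz2, hz3⟩, h1, h2⟩
      refine ⟨z.1, hz1, z.2, hz2, h1, h2, fun i => ⟨fun h => ?_, fun h => ?_⟩,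
        fun i => ⟨fun h => ?_, fun h => ?_⟩⟩
      · by_contra hik
        exact h ((hz3 i).2 hik).1
      · have := ((hz3 i).1 h).1
        have hq' : (0 : ℝ) < q := by exact_mod_cast hq
        intro h0
        rw [h0] at this
        linarith
      · by_contra hik
        exact h ((hz3 i).2 hik).2
      · have := ((hz3 i).1 h).2
        have hq' : (0 : ℝ) < q := by exact_mod_cast hq
        intro h0
        rw [h0] at this
        linarith
  rw [hunion]
  exact MeasurableSet.iUnion fun q => (hA (q : ℚ)).measurableSet

end Meas
section Final

variable {n k : ℕ}

lemma pow_bound_eq (hk : k < n) :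
    ENNReal.ofReal ((2 : ℝ) ^ ((k : ℤ) - (n : ℤ))) = ((2 : ℝ≥0∞) ^ (n - k))⁻¹ := by
  have hz : ((n - k : ℕ) : ℤ) = (n : ℤ) - (k : ℤ) := by omega
  have h1 : (2 : ℝ) ^ ((k : ℤ) - (n : ℤ)) = ((2 : ℝ) ^ (n - k))⁻¹ := by
    rw [show (k : ℤ) - (n : ℤ) = -((n - k : ℕ) : ℤ) by omega, _root_.zpow_neg, zpow_natCast]
  rw [h1, ENNReal.ofReal_inv_of_pos (by positivity)]
  congr 1
  rw [ENNReal.ofReal_pow (by norm_num)]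
  norm_num

lemma flip_bound (hk : k < n) {μ : Measure (Matrix (Fin n) (Fin n) ℝ)}
    (hμ : IsOrthogonalHaar μ) (E : Set (Matrix (Fin n) (Fin n) ℝ)) (hE : MeasurableSet E)
    (hcount : ∀ Q (s : Finset (FlipPair n k)), (∀ p ∈ s, flipQ k p Q ∈ E) →
      s.card ≤ 2 ^ (n - k)) :
    μ E ≤ ENNReal.ofReal ((2 : ℝ) ^ ((k : ℤ) - (n : ℤ))) := by
  haveI := hμ.1
  have hcb := count_bound μ (fun p : FlipPair n k => flipQ k p)
    (fun p => flipQ_measurable p) (fun p => flipQ_map_eq hμ p) E hE (2 ^ (n - k)) hcount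
  have hcard : (Fintype.card (FlipPair n k) : ℝ≥0∞)
      = (2 : ℝ≥0∞) ^ (n - k) * (2 : ℝ≥0∞) ^ (n - k) := by
    have hc : Fintype.card (FlipPair n k) = 2 ^ (n - k) * 2 ^ (n - k) := by
      simp [Fintype.card_prod, Fintype.card_fun]
    rw [hc]
    push_cast
    ring
  rw [hcard] at hcb
  have hne0 : ((2 : ℝ≥0∞) ^ (n - k)) ≠ 0 := by positivity
  have hnetop : ((2 : ℝ≥0∞) ^ (n - k)) ≠ ⊤ := by
    exact ENNReal.pow_ne_top (by norm_num)
  have h2 : (2 : ℝ≥0∞) ^ (n - k) * μ E ≤ 1 := by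
    have h3 : (2 : ℝ≥0∞) ^ (n - k) * ((2 : ℝ≥0∞) ^ (n - k) * μ E)
        ≤ (2 : ℝ≥0∞) ^ (n - k) * 1 := by
      rw [← mul_assoc, mul_one]
      calc (2 : ℝ≥0∞) ^ (n - k) * (2 : ℝ≥0∞) ^ (n - k) * μ E ≤ ((2 ^ (n - k) : ℕ) : ℝ≥0∞) :=
            hcb
        _ = (2 : ℝ≥0∞) ^ (n - k) := by push_cast; simp
    exact (ENNReal.mul_le_mul_iff_right hne0 hnetop).mp h3
  rw [pow_bound_eq hk, ENNReal.le_inv_iff_mul_le]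
  rwa [mul_comm]

end Final


/-- For a Haar-distributed `Q ∈ O_n` written in blocks `[[Q₁, Q₂], [Q₃, Q₄]]` with `Q₁` of
size `k × k`: letting `v = 1/(𝟙ᵀQ₁⁻¹𝟙)`, `y = v Q₁⁻¹𝟙` and `x = v (Q₁ᵀ)⁻¹𝟙`, the event
that `Q₁` is invertible, `𝟙ᵀQ₁⁻¹𝟙 ≠ 0`, `xᵀQ₂ ≤ v𝟙ᵀ` and `Q₃y ≥ v𝟙` (componentwise) has
probability at most `2^{k−n}`. Consequently, the event that the zero-sum game on `Q` is
supported by the rows `{1,…,k}` and the columns `{1,…,k}` (i.e. there exist optimal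
strategies whose supports are exactly the first `k` coordinates) has probability at most
`2^{k−n}`. -/
theorem haar_block_support_probability (n k : ℕ) (hn : 2 ≤ n) (hk1 : 1 ≤ k) (hk : k < n)
    (μ : Measure (Matrix (Fin n) (Fin n) ℝ)) (hμ : IsOrthogonalHaar μ) :
    μ {Q | IsUnit (block1 hk.le Q).det ∧
        ((fun _ => (1 : ℝ)) ⬝ᵥ (block1 hk.le Q)⁻¹.mulVec fun _ => (1 : ℝ)) ≠ 0 ∧
        (∀ j, (((1 / ((fun _ => (1 : ℝ)) ⬝ᵥ (block1 hk.le Q)⁻¹.mulVec fun _ => (1 : ℝ))) •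
              ((block1 hk.le Q)ᵀ)⁻¹.mulVec fun _ => (1 : ℝ)) ᵥ* block2 hk.le Q) j ≤
            1 / ((fun _ => (1 : ℝ)) ⬝ᵥ (block1 hk.le Q)⁻¹.mulVec fun _ => (1 : ℝ))) ∧
        (∀ i, 1 / ((fun _ => (1 : ℝ)) ⬝ᵥ (block1 hk.le Q)⁻¹.mulVec fun _ => (1 : ℝ)) ≤
            ((block3 hk.le Q).mulVec
              ((1 / ((fun _ => (1 : ℝ)) ⬝ᵥ (block1 hk.le Q)⁻¹.mulVec fun _ => (1 : ℝ))) •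
                (block1 hk.le Q)⁻¹.mulVec fun _ => (1 : ℝ))) i)} ≤
      ENNReal.ofReal ((2 : ℝ) ^ ((k : ℤ) - (n : ℤ))) ∧
    μ {Q | ∃ x ∈ stdSimplex ℝ (Fin n), ∃ y ∈ stdSimplex ℝ (Fin n),
        (∀ j, (x ᵥ* Q) j ≤ gameValue Q) ∧
        (∀ i, gameValue Q ≤ Q.mulVec y i) ∧
        (∀ i : Fin n, x i ≠ 0 ↔ (i : ℕ) < k) ∧
        (∀ j : Fin n, y j ≠ 0 ↔ (j : ℕ) < k)} ≤
      ENNReal.ofReal ((2 : ℝ) ^ ((k : ℤ) - (n : ℤ))) := by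
  haveI := hμ.1
  have hn0 : 0 < n := by omega
  constructor
  · exact flip_bound hk hμ (E1 hk.le) (E1_measurable hk.le) (count_E1 hk.le)
  · -- second event
    set G : Set (Matrix (Fin n) (Fin n) ℝ) := {Q | IsUnit (block1 hk.le Q).det} with hG
    have hGmeas : MeasurableSet G := by
      have : G = {Q : Matrix (Fin n) (Fin n) ℝ | (block1 hk.le Q).det ≠ 0} := by
        ext Q; simp [hG, isUnit_iff_ne_zero]
      rw [this]
      exact (measurable_det_block1 hk.le (measurableSet_singleton 0)).compl
    have hOmeas : MeasurableSet {Q : Matrix (Fin n) (Fin n) ℝ | Qᵀ * Q = 1} := by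
      have : IsClosed {Q : Matrix (Fin n) (Fin n) ℝ | Qᵀ * Q = 1} :=
        isClosed_eq ((continuous_id.matrix_transpose).matrix_mul continuous_id)
          continuous_const
      exact this.measurableSet
    have hOc : μ {Q : Matrix (Fin n) (Fin n) ℝ | Qᵀ * Q = 1}ᶜ = 0 := by
      rw [measure_compl hOmeas (measure_ne_top μ _), hμ.2.1, measure_univ, tsub_self]
    have hsub : E2 n k ⊆ (E2 n k ∩ G) ∪
        ({Q : Matrix (Fin n) (Fin n) ℝ | Qᵀ * Q = 1}ᶜ ∪
          {Q : Matrix (Fin n) (Fin n) ℝ | Qᵀ * Q = 1 ∧ ¬ IsUnit (block1 hk.le Q).det}) := by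
      intro Q hQ
      by_cases hg : Q ∈ G
      · exact Or.inl ⟨hQ, hg⟩
      · by_cases ho : Qᵀ * Q = 1
        · exact Or.inr (Or.inr ⟨ho, hg⟩)
        · exact Or.inr (Or.inl ho)
    have hbound : μ (E2 n k ∩ G) ≤ ENNReal.ofReal ((2 : ℝ) ^ ((k : ℤ) - (n : ℤ))) := by
      refine flip_bound hk hμ _ ((E2_measurable hn0 hk1 hk.le).inter hGmeas) ?_
      intro Q s hs
      rcases s.eq_empty_or_nonempty with rfl | ⟨p₀, hp₀⟩
      · simp
      have hu : IsUnit (block1 hk.le Q).det := by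
        have := (hs p₀ hp₀).2
        rwa [hG, Set.mem_setOf_eq, block1_flip hk.le p₀ Q] at this
      exact count_E2 hk.le Q hu s (fun p hp => (hs p hp).1)
    calc μ (E2 n k) ≤ μ ((E2 n k ∩ G) ∪
        ({Q : Matrix (Fin n) (Fin n) ℝ | Qᵀ * Q = 1}ᶜ ∪
          {Q : Matrix (Fin n) (Fin n) ℝ | Qᵀ * Q = 1 ∧ ¬ IsUnit (block1 hk.le Q).det})) :=
          measure_mono hsub
      _ ≤ μ (E2 n k ∩ G) + μ ({Q : Matrix (Fin n) (Fin n) ℝ | Qᵀ * Q = 1}ᶜ ∪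
          {Q : Matrix (Fin n) (Fin n) ℝ | Qᵀ * Q = 1 ∧ ¬ IsUnit (block1 hk.le Q).det}) :=
          measure_union_le _ _
      _ ≤ μ (E2 n k ∩ G) + (μ {Q : Matrix (Fin n) (Fin n) ℝ | Qᵀ * Q = 1}ᶜ +
          μ {Q : Matrix (Fin n) (Fin n) ℝ | Qᵀ * Q = 1 ∧ ¬ IsUnit (block1 hk.le Q).det}) := by
          exact add_le_add le_rfl (measure_union_le _ _)
      _ = μ (E2 n k ∩ G) := by
          rw [hOc, null_singular hμ hk1 hk.le, add_zero, add_zero]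
      _ ≤ ENNReal.ofReal ((2 : ℝ) ^ ((k : ℤ) - (n : ℤ))) := hbound
end

section
/- There exists a function f : (0, ∞) → ℝ with f(θ) → +∞ as θ → 0⁺ such that for every integer k ≥ 1 and every θ > 0, if g ~ N(0, I_k) is a standard Gaussian vector and z = g/‖g‖, then P( z_i ≥ 0 for all i ∈ [k] and 𝟙ᵀz ≤ θ√k ) ≤ exp(−k·f(θ)). -/
open MeasureTheory ProbabilityTheory Filter

/-- The Euclidean norm on `Fin k → ℝ`. -/
noncomputable def euclNorm {k : ℕ} (x : Fin k → ℝ) : ℝ := Real.sqrt (∑ i, x i ^ 2)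

/-- The standard Gaussian measure on `Fin k → ℝ` (i.i.d. `N(0,1)` coordinates). -/
noncomputable def stdGaussianPi (k : ℕ) : Measure (Fin k → ℝ) :=
  Measure.pi fun _ => gaussianReal 0 1

section Aux
open Real Set
open scoped ENNReal NNReal

lemma lintegral_pi_prod_pow (μ : Measure ℝ) [SigmaFinite μ] :
    ∀ (n : ℕ) (h : ℝ → ℝ≥0∞), Measurable h →
      ∫⁻ x : Fin n → ℝ, ∏ i, h (x i) ∂(Measure.pi fun _ => μ) = (∫⁻ y, h y ∂μ) ^ n := by
  intro n
  induction n with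
  | zero => intro h hm; simp
  | succ n ih =>
    intro h hm
    have hprodmeas : Measurable fun x : Fin (n+1) → ℝ => ∏ i, h (x i) :=
      Finset.measurable_prod _ fun i _ => hm.comp (measurable_pi_apply i)
    have hT := (measurePreserving_piFinSuccAbove (fun _ : Fin (n+1) => μ) 0).symm
    rw [← hT.lintegral_comp hprodmeas]
    simp_rw [MeasurableEquiv.piFinSuccAbove_symm_apply, Fin.insertNthEquiv,
      Fin.prod_univ_succ, Fin.insertNth_zero]
    simp only [Equiv.coe_fn_mk, Fin.zero_succAbove, cast_eq, Fin.cons_zero, Fin.cons_succ]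
    have hmeas2 : AEMeasurable (fun y : Fin n → ℝ => ∏ j, h (y j))
        (Measure.pi fun _ : Fin n => μ) :=
      (Finset.measurable_prod _ fun j _ => hm.comp (measurable_pi_apply j)).aemeasurable
    rw [lintegral_prod_mul hm.aemeasurable hmeas2, ih h hm, pow_succ']

lemma gaussianPDFReal_le (x : ℝ) :
    gaussianPDFReal 0 1 x ≤ (Real.sqrt (2 * π))⁻¹ := by
  unfold gaussianPDFReal
  simp only [NNReal.coe_one, mul_one, sub_zero]
  calc (Real.sqrt (2 * π))⁻¹ * rexp (-x ^ 2 / 2)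
      ≤ (Real.sqrt (2 * π))⁻¹ * 1 := by
        apply mul_le_mul_of_nonneg_left _ (by positivity)
        rw [Real.exp_le_one_iff]
        nlinarith [sq_nonneg x]
    _ = _ := mul_one _

lemma gauss_lintegral_exp_neg {lam : ℝ} (hlam : 0 < lam) :
    ∫⁻ x, (Ici (0:ℝ)).indicator (fun x => ENNReal.ofReal (rexp (-(lam * x)))) x
        ∂(gaussianReal 0 1)
      ≤ ENNReal.ofReal ((Real.sqrt (2 * π))⁻¹ * lam⁻¹) := by
  have hmeas : Measurable fun x : ℝ =>
      (Ici (0:ℝ)).indicator (fun x => ENNReal.ofReal (rexp (-(lam * x)))) x :=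
    Measurable.indicator
      (by fun_prop) measurableSet_Ici
  rw [gaussianReal_of_var_ne_zero 0 one_ne_zero,
    lintegral_withDensity_eq_lintegral_mul _ (measurable_gaussianPDF 0 1) hmeas]
  have hb : ∀ x : ℝ, (gaussianPDF 0 1 * fun x =>
      (Ici (0:ℝ)).indicator (fun x => ENNReal.ofReal (rexp (-(lam * x)))) x) x ≤
      (Ici (0:ℝ)).indicator
        (fun x => ENNReal.ofReal ((Real.sqrt (2 * π))⁻¹ * rexp (-(lam * x)))) x := by
    intro x
    simp only [Pi.mul_apply]
    by_cases hx : x ∈ Ici (0:ℝ)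
    · rw [Set.indicator_of_mem hx, Set.indicator_of_mem hx, gaussianPDF,
        ← ENNReal.ofReal_mul (gaussianPDFReal_nonneg 0 1 x)]
      exact ENNReal.ofReal_le_ofReal <|
        mul_le_mul_of_nonneg_right (gaussianPDFReal_le x) (Real.exp_pos _).le
    · rw [Set.indicator_of_notMem hx, Set.indicator_of_notMem hx, mul_zero]
  refine (lintegral_mono hb).trans ?_
  rw [lintegral_indicator measurableSet_Ici _,
    setLIntegral_congr (Ioi_ae_eq_Ici (a := (0:ℝ))).symm]
  have hint : IntegrableOn (fun x => (Real.sqrt (2 * π))⁻¹ * rexp (-(lam * x))) (Ioi 0) := by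
    apply Integrable.const_mul
    simpa [neg_mul] using (exp_neg_integrableOn_Ioi 0 hlam).integrable
  rw [← ofReal_integral_eq_lintegral_ofReal hint
    (Filter.Eventually.of_forall fun x => by positivity)]
  apply ENNReal.ofReal_le_ofReal
  rw [MeasureTheory.integral_const_mul]
  have : (∫ x in Ioi (0:ℝ), rexp (-(lam * x))) = lam⁻¹ := by
    have := integral_comp_mul_left_Ioi (fun y => rexp (-y)) 0 hlam
    simp only [mul_zero, integral_exp_neg_Ioi, neg_zero, Real.exp_zero, smul_eq_mul,
      mul_one] at this
    rw [this]
  rw [this]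

lemma gauss_lintegral_exp_sq :
    ∫⁻ x, ENNReal.ofReal (rexp (x ^ 2 / 4)) ∂(gaussianReal 0 1)
      ≤ ENNReal.ofReal (Real.sqrt 2) := by
  have hmeas : Measurable fun x : ℝ => ENNReal.ofReal (rexp (x ^ 2 / 4)) := by fun_prop
  rw [gaussianReal_of_var_ne_zero 0 one_ne_zero,
    lintegral_withDensity_eq_lintegral_mul _ (measurable_gaussianPDF 0 1) hmeas]
  have heq : ∀ x : ℝ, (gaussianPDF 0 1 * fun x => ENNReal.ofReal (rexp (x ^ 2 / 4))) x =
      ENNReal.ofReal ((Real.sqrt (2 * π))⁻¹ * rexp (-(4:ℝ)⁻¹ * x ^ 2)) := by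
    intro x
    simp only [Pi.mul_apply, gaussianPDF,
      ← ENNReal.ofReal_mul (gaussianPDFReal_nonneg 0 1 x)]
    congr 1
    unfold gaussianPDFReal
    simp only [NNReal.coe_one, mul_one, sub_zero]
    rw [mul_assoc, ← Real.exp_add]
    congr 1
    ring
  simp_rw [heq]
  have hint : Integrable (fun x => (Real.sqrt (2 * π))⁻¹ * rexp (-(4:ℝ)⁻¹ * x ^ 2)) := by
    apply Integrable.const_mul
    simpa using integrable_exp_neg_mul_sq (by norm_num : (0:ℝ) < 4⁻¹)
  rw [← ofReal_integral_eq_lintegral_ofReal hint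
    (Filter.Eventually.of_forall fun x => by positivity)]
  apply ENNReal.ofReal_le_ofReal
  rw [MeasureTheory.integral_const_mul]
  have hg : (∫ x : ℝ, rexp (-(4:ℝ)⁻¹ * x ^ 2)) = Real.sqrt (π / 4⁻¹) := by
    simpa using integral_gaussian (4:ℝ)⁻¹
  rw [hg]
  have hpi : π / (4:ℝ)⁻¹ = 4 * π := by
    rw [div_eq_mul_inv, inv_inv]
    ring
  rw [hpi]
  have h2 : (Real.sqrt (2 * π))⁻¹ * Real.sqrt (4 * π) = Real.sqrt 2 := by
    rw [inv_mul_eq_div, ← Real.sqrt_div (by positivity)]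
    congr 1
    rw [mul_comm 4 π, mul_comm 2 π, mul_div_mul_left _ _ pi_ne_zero]
    norm_num
  rw [h2]



noncomputable def aFun (θ : ℝ) : ℝ := -(1 + Real.log ((Real.sqrt (2 * π))⁻¹ * Real.sqrt θ))
noncomputable def bFun (θ : ℝ) : ℝ := (4 * θ)⁻¹ - Real.log (Real.sqrt 2)

lemma bound1 (k : ℕ) {θ : ℝ} (hθ : 0 < θ) :
    stdGaussianPi k {g | (∀ i, 0 ≤ g i) ∧ ∑ i, g i ≤ Real.sqrt θ * k} ≤
      ENNReal.ofReal (rexp (-(k:ℝ) * aFun θ)) := by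
  have hsθ : (0:ℝ) < Real.sqrt θ := Real.sqrt_pos.2 hθ
  set lam : ℝ := (Real.sqrt θ)⁻¹ with hlam_def
  have hlam : 0 < lam := inv_pos.2 hsθ
  set h : ℝ → ℝ≥0∞ := (Ici (0:ℝ)).indicator (fun x => ENNReal.ofReal (rexp (-(lam * x))))
    with hh_def
  have hm : Measurable h := Measurable.indicator (by fun_prop) measurableSet_Ici
  have hmprod : Measurable fun g : Fin k → ℝ => ∏ i, h (g i) :=
    Finset.measurable_prod _ fun i _ => hm.comp (measurable_pi_apply i)
  have key : stdGaussianPi k {g | (∀ i, 0 ≤ g i) ∧ ∑ i, g i ≤ Real.sqrt θ * k} ≤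
      ∫⁻ g, ENNReal.ofReal (rexp k) * ∏ i, h (g i) ∂(stdGaussianPi k) := by
    apply meas_le_lintegral₀ ((measurable_const.mul hmprod).aemeasurable)
    rintro g ⟨hg0, hgsum⟩
    have hprod : (∏ i, h (g i)) = ENNReal.ofReal (rexp (-(lam * ∑ i, g i))) := by
      have : ∀ i : Fin k, h (g i) = ENNReal.ofReal (rexp (-(lam * g i))) := fun i =>
        Set.indicator_of_mem (hg0 i) _
      simp_rw [this, ← ENNReal.ofReal_prod_of_nonneg (fun i _ => (Real.exp_pos _).le),
        ← Real.exp_sum]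
      congr 2
      rw [Finset.mul_sum, ← Finset.sum_neg_distrib]
    simp only [Pi.mul_apply]
    rw [hprod, ← ENNReal.ofReal_mul (Real.exp_pos _).le, ← Real.exp_add]
    rw [ENNReal.one_le_ofReal]
    apply Real.one_le_exp
    have : lam * (∑ i, g i) ≤ lam * (Real.sqrt θ * k) :=
      mul_le_mul_of_nonneg_left hgsum hlam.le
    have hls : lam * (Real.sqrt θ * k) = k := by
      rw [hlam_def, ← mul_assoc, inv_mul_cancel₀ hsθ.ne', one_mul]
    nlinarith
  refine key.trans ?_
  rw [lintegral_const_mul _ hmprod, stdGaussianPi, lintegral_pi_prod_pow _ k h hm]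
  have hint : (∫⁻ y, h y ∂(gaussianReal 0 1)) ≤
      ENNReal.ofReal ((Real.sqrt (2 * π))⁻¹ * lam⁻¹) := gauss_lintegral_exp_neg hlam
  calc ENNReal.ofReal (rexp k) * (∫⁻ y, h y ∂(gaussianReal 0 1)) ^ k
      ≤ ENNReal.ofReal (rexp k) * ENNReal.ofReal ((Real.sqrt (2 * π))⁻¹ * lam⁻¹) ^ k := by
        gcongr
    _ = ENNReal.ofReal (rexp k * ((Real.sqrt (2 * π))⁻¹ * lam⁻¹) ^ k) := by
        rw [← ENNReal.ofReal_pow (by positivity), ← ENNReal.ofReal_mul (Real.exp_pos _).le]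
    _ = ENNReal.ofReal (rexp (-(k:ℝ) * aFun θ)) := by
        congr 1
        have hc : (0:ℝ) < (Real.sqrt (2 * π))⁻¹ * lam⁻¹ := by positivity
        rw [← Real.exp_log hc, ← Real.exp_nat_mul, ← Real.exp_add]
        congr 1
        have hli : lam⁻¹ = Real.sqrt θ := by rw [hlam_def, inv_inv]
        rw [hli]
        unfold aFun
        ring

lemma bound2 (k : ℕ) {θ : ℝ} (hθ : 0 < θ) :
    stdGaussianPi k {g | ¬ (∑ i, (g i) ^ 2 ≤ k / θ)} ≤
      ENNReal.ofReal (rexp (-(k:ℝ) * bFun θ)) := by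
  set h : ℝ → ℝ≥0∞ := fun x => ENNReal.ofReal (rexp (x ^ 2 / 4)) with hh_def
  have hm : Measurable h := by fun_prop
  have hmprod : Measurable fun g : Fin k → ℝ => ∏ i, h (g i) :=
    Finset.measurable_prod _ fun i _ => hm.comp (measurable_pi_apply i)
  have key : stdGaussianPi k {g | ¬ (∑ i, (g i) ^ 2 ≤ k / θ)} ≤
      ∫⁻ g, ENNReal.ofReal (rexp (-((k:ℝ) / (4 * θ)))) * ∏ i, h (g i)
        ∂(stdGaussianPi k) := by
    apply meas_le_lintegral₀ ((measurable_const.mul hmprod).aemeasurable)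
    intro g hg
    simp only [Set.mem_setOf_eq, not_le] at hg
    have hprod : (∏ i, h (g i)) = ENNReal.ofReal (rexp ((∑ i, (g i) ^ 2) / 4)) := by
      simp_rw [hh_def, ← ENNReal.ofReal_prod_of_nonneg (fun i _ => (Real.exp_pos _).le),
        ← Real.exp_sum, ← Finset.sum_div]
    simp only [Pi.mul_apply]
    rw [hprod, ← ENNReal.ofReal_mul (Real.exp_pos _).le, ← Real.exp_add,
      ENNReal.one_le_ofReal]
    apply Real.one_le_exp
    have h4 : (k:ℝ) / (4 * θ) ≤ (∑ i, (g i) ^ 2) / 4 := by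
      rw [div_le_div_iff₀ (by positivity) (by norm_num)]
      calc (k:ℝ) * 4 = ((k:ℝ)/θ) * θ * 4 := by field_simp
        _ ≤ (∑ i, (g i) ^ 2) * θ * 4 := by
            have := hg.le
            nlinarith
        _ = (∑ i, (g i) ^ 2) * (4 * θ) := by ring
    linarith
  refine key.trans ?_
  rw [lintegral_const_mul _ hmprod, stdGaussianPi, lintegral_pi_prod_pow _ k h hm]
  calc ENNReal.ofReal (rexp (-((k:ℝ) / (4 * θ)))) * (∫⁻ y, h y ∂(gaussianReal 0 1)) ^ k
      ≤ ENNReal.ofReal (rexp (-((k:ℝ) / (4 * θ)))) * ENNReal.ofReal (Real.sqrt 2) ^ k := by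
        gcongr
        exact gauss_lintegral_exp_sq
    _ = ENNReal.ofReal (rexp (-((k:ℝ) / (4 * θ))) * Real.sqrt 2 ^ k) := by
        rw [← ENNReal.ofReal_pow (by positivity), ← ENNReal.ofReal_mul (Real.exp_pos _).le]
    _ = ENNReal.ofReal (rexp (-(k:ℝ) * bFun θ)) := by
        congr 1
        have h2 : (0:ℝ) < Real.sqrt 2 := by positivity
        rw [← Real.exp_log h2, ← Real.exp_nat_mul, ← Real.exp_add]
        congr 1
        unfold bFun
        have : (k:ℝ) / (4 * θ) = (k:ℝ) * (4 * θ)⁻¹ := by rw [div_eq_mul_inv]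
        rw [this]
        ring






lemma subset_lemma (k : ℕ) {θ : ℝ} (hθ : 0 < θ) :
    {g : Fin k → ℝ | (∀ i, 0 ≤ g i / euclNorm g) ∧
        (∑ i, g i / euclNorm g) ≤ θ * Real.sqrt k} ⊆
      {g | (∀ i, 0 ≤ g i) ∧ ∑ i, g i ≤ Real.sqrt θ * k} ∪
      {g | ¬ (∑ i, (g i) ^ 2 ≤ k / θ)} := by
  rintro g ⟨hg0, hgsum⟩
  by_cases hsq : ∑ i, (g i) ^ 2 ≤ k / θ
  · left
    have hN0 : 0 ≤ euclNorm g := Real.sqrt_nonneg _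
    rcases eq_or_lt_of_le hN0 with hN | hN
    · -- euclNorm g = 0, so all g i = 0
      have hzero : ∀ i, g i = 0 := by
        have hN' : Real.sqrt (∑ i, (g i) ^ 2) = 0 := hN.symm
        have h0 : ∑ i, (g i) ^ 2 = 0 :=
          le_antisymm (Real.sqrt_eq_zero'.mp hN')
            (Finset.sum_nonneg fun i _ => sq_nonneg _)
        intro i
        have := Finset.sum_eq_zero_iff_of_nonneg
          (fun j _ => sq_nonneg (g j)) |>.mp h0 i (Finset.mem_univ i)
        exact pow_eq_zero_iff (n := 2) (by norm_num) |>.mp this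
      constructor
      · intro i; rw [hzero i]
      · simp [hzero]
        positivity
    · constructor
      · intro i
        have := mul_nonneg (hg0 i) hN.le
        rwa [div_mul_cancel₀ _ hN.ne'] at this
      · have hsum : (∑ i, g i) / euclNorm g ≤ θ * Real.sqrt k := by
          rwa [← Finset.sum_div] at hgsum
        have h1 : ∑ i, g i ≤ θ * Real.sqrt k * euclNorm g := by
          have := mul_le_mul_of_nonneg_right hsum hN.le
          rwa [div_mul_cancel₀ _ hN.ne'] at this
        have h2 : euclNorm g ≤ Real.sqrt ((k:ℝ) / θ) := by
          unfold euclNorm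
          exact Real.sqrt_le_sqrt hsq
        have h3 : θ * Real.sqrt k * euclNorm g ≤ θ * Real.sqrt k * Real.sqrt ((k:ℝ)/θ) :=
          mul_le_mul_of_nonneg_left h2 (by positivity)
        have h4 : θ * Real.sqrt k * Real.sqrt ((k:ℝ)/θ) = Real.sqrt θ * k := by
          have hsθ : Real.sqrt θ * Real.sqrt θ = θ := Real.mul_self_sqrt hθ.le
          have hsk : Real.sqrt (k:ℝ) * Real.sqrt (k:ℝ) = (k:ℝ) :=
            Real.mul_self_sqrt (Nat.cast_nonneg k)
          have h5 : Real.sqrt θ ≠ 0 := (Real.sqrt_pos.2 hθ).ne'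
          rw [Real.sqrt_div (Nat.cast_nonneg k)]
          field_simp
          nlinarith [Real.sqrt_nonneg θ, Real.sqrt_nonneg (k:ℝ)]
        linarith
  · right; exact hsq

lemma tendsto_min_atTop {α : Type*} [LinearOrder α] {β : Type*} {l : Filter β}
    {f g : β → α} (hf : Tendsto f l atTop) (hg : Tendsto g l atTop) :
    Tendsto (fun x => min (f x) (g x)) l atTop := by
  rw [tendsto_atTop] at *
  intro b
  filter_upwards [hf b, hg b] with x h1 h2
  exact le_min h1 h2

lemma tendsto_aFun : Tendsto aFun (nhdsWithin 0 (Set.Ioi 0)) atTop := by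
  have h1 : Tendsto (fun θ : ℝ => (Real.sqrt (2 * π))⁻¹ * Real.sqrt θ)
      (nhdsWithin 0 (Set.Ioi 0)) (nhdsWithin 0 (Set.Ioi 0)) := by
    rw [tendsto_nhdsWithin_iff]
    constructor
    · have : Tendsto (fun θ : ℝ => (Real.sqrt (2 * π))⁻¹ * Real.sqrt θ) (nhds 0)
          (nhds ((Real.sqrt (2 * π))⁻¹ * Real.sqrt 0)) :=
        (continuous_const.mul Real.continuous_sqrt).tendsto 0
      simpa using this.mono_left nhdsWithin_le_nhds
    · filter_upwards [self_mem_nhdsWithin] with θ (hθ : (0:ℝ) < θ)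
      have : 0 < Real.sqrt θ := Real.sqrt_pos.2 hθ
      have h2π : (0:ℝ) < Real.sqrt (2 * π) := Real.sqrt_pos.2 (by positivity)
      exact mem_Ioi.2 (by positivity)
  have h2 : Tendsto (fun θ : ℝ => Real.log ((Real.sqrt (2 * π))⁻¹ * Real.sqrt θ))
      (nhdsWithin 0 (Set.Ioi 0)) atBot := Real.tendsto_log_nhdsGT_zero.comp h1
  have h3 : Tendsto (fun θ : ℝ => -(1 + Real.log ((Real.sqrt (2 * π))⁻¹ * Real.sqrt θ)))
      (nhdsWithin 0 (Set.Ioi 0)) atTop := by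
    apply Filter.tendsto_neg_atBot_atTop.comp
    exact tendsto_atBot_add_const_left _ 1 h2
  exact h3

lemma tendsto_bFun : Tendsto bFun (nhdsWithin 0 (Set.Ioi 0)) atTop := by
  have h1 : Tendsto (fun θ : ℝ => 4 * θ) (nhdsWithin 0 (Set.Ioi 0))
      (nhdsWithin 0 (Set.Ioi 0)) := by
    rw [tendsto_nhdsWithin_iff]
    constructor
    · have : Tendsto (fun θ : ℝ => 4 * θ) (nhds 0) (nhds (4 * 0)) :=
        (continuous_const.mul continuous_id).tendsto 0
      simpa using this.mono_left nhdsWithin_le_nhds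
    · filter_upwards [self_mem_nhdsWithin] with θ (hθ : (0:ℝ) < θ)
      exact mem_Ioi.2 (by positivity)
  have h2 : Tendsto (fun θ : ℝ => (4 * θ)⁻¹) (nhdsWithin 0 (Set.Ioi 0)) atTop :=
    tendsto_inv_nhdsGT_zero.comp h1
  exact tendsto_atTop_add_const_right _ _ h2

theorem gaussian_direction_small_sum_tail' :
    ∃ f : ℝ → ℝ, Tendsto f (nhdsWithin 0 (Set.Ioi 0)) atTop ∧
      ∀ k : ℕ, 1 ≤ k → ∀ θ : ℝ, 0 < θ →
        stdGaussianPi k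
            {g | (∀ i, 0 ≤ g i / euclNorm g) ∧
              (∑ i, g i / euclNorm g) ≤ θ * Real.sqrt k} ≤
          ENNReal.ofReal (Real.exp (-(k : ℝ) * f θ)) := by
  refine ⟨fun θ => min (aFun θ) (bFun θ) - Real.log 2, ?_, ?_⟩
  · exact tendsto_atTop_add_const_right _ _ (tendsto_min_atTop tendsto_aFun tendsto_bFun)
  · intro k hk θ hθ
    show _ ≤ ENNReal.ofReal (Real.exp (-(k : ℝ) * (min (aFun θ) (bFun θ) - Real.log 2)))
    set m := min (aFun θ) (bFun θ) with hm
    calc stdGaussianPi k {g | (∀ i, 0 ≤ g i / euclNorm g) ∧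
            (∑ i, g i / euclNorm g) ≤ θ * Real.sqrt k}
        ≤ stdGaussianPi k ({g | (∀ i, 0 ≤ g i) ∧ ∑ i, g i ≤ Real.sqrt θ * k} ∪
            {g | ¬ (∑ i, (g i) ^ 2 ≤ k / θ)}) := measure_mono (subset_lemma k hθ)
      _ ≤ stdGaussianPi k {g | (∀ i, 0 ≤ g i) ∧ ∑ i, g i ≤ Real.sqrt θ * k} +
          stdGaussianPi k {g | ¬ (∑ i, (g i) ^ 2 ≤ k / θ)} := measure_union_le _ _
      _ ≤ ENNReal.ofReal (rexp (-(k:ℝ) * aFun θ)) + ENNReal.ofReal (rexp (-(k:ℝ) * bFun θ)) :=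
          add_le_add (bound1 k hθ) (bound2 k hθ)
      _ ≤ ENNReal.ofReal (rexp (-(k:ℝ) * m)) + ENNReal.ofReal (rexp (-(k:ℝ) * m)) := by
          apply add_le_add <;> apply ENNReal.ofReal_le_ofReal <;> apply Real.exp_le_exp.2
          · have : m ≤ aFun θ := min_le_left _ _
            nlinarith [Nat.cast_nonneg (α := ℝ) k]
          · have : m ≤ bFun θ := min_le_right _ _
            nlinarith [Nat.cast_nonneg (α := ℝ) k]
      _ = ENNReal.ofReal (2 * rexp (-(k:ℝ) * m)) := by
          rw [← ENNReal.ofReal_add (Real.exp_pos _).le (Real.exp_pos _).le]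
          congr 1; ring
      _ ≤ ENNReal.ofReal (Real.exp (-(k : ℝ) * (m - Real.log 2))) := by
          apply ENNReal.ofReal_le_ofReal
          have h1 : (1:ℝ) ≤ (k:ℝ) := by exact_mod_cast hk
          have hl2 : (0:ℝ) ≤ Real.log 2 := Real.log_nonneg one_le_two
          calc 2 * rexp (-(k:ℝ) * m) = rexp (Real.log 2 + -(k:ℝ) * m) := by
                rw [Real.exp_add, Real.exp_log two_pos]
            _ ≤ rexp (-(k:ℝ) * (m - Real.log 2)) := by
                apply Real.exp_le_exp.2
                nlinarith [mul_nonneg (sub_nonneg.2 h1) hl2]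

end Aux

/-- There is a function `f` with `f(θ) → +∞` as `θ → 0⁺` such that for every `k ≥ 1` and
`θ > 0`, if `g ~ N(0, I_k)` and `z = g/‖g‖`, then
`P(z ≥ 0 componentwise and 𝟙ᵀz ≤ θ√k) ≤ exp(−k f(θ))`. -/
theorem gaussian_direction_small_sum_tail :
    ∃ f : ℝ → ℝ, Tendsto f (nhdsWithin 0 (Set.Ioi 0)) atTop ∧
      ∀ k : ℕ, 1 ≤ k → ∀ θ : ℝ, 0 < θ →
        stdGaussianPi k
            {g | (∀ i, 0 ≤ g i / euclNorm g) ∧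
              (∑ i, g i / euclNorm g) ≤ θ * Real.sqrt k} ≤
          ENNReal.ofReal (Real.exp (-(k : ℝ) * f θ)) := by
  exact gaussian_direction_small_sum_tail'
end
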